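/- arXiv:hep-th/9807023 — 2 statements merged into one kernel-verified Lean document; each statement's English description precedes it below -/
import Mathlib

section
/- Let e : ℝⁿ → GL(n, ℝ) be smooth in variables (ξ₁, ξ₂) ∈ ℝⁿ × ℝⁿ, written e(ξ₁,ξ₂) = (eⁱ_α). Suppose ∂e^j_α/∂ξ₁ᵢ = ∂eⁱ_α/∂ξ₁ⱼ for all i,j,α and Σ_α eⁱ_α ∂e^j_β/∂ξ₂α = Σ_α e^j_α ∂eⁱ_β/∂ξ₂α for all i,j,β. Then the almost complex structure J on ℝⁿ × ℝⁿ defined by J(∂/∂ξ₁ᵢ) = Σ_α eⁱ_α ∂/∂ξ₂α and J(∂/∂ξ₂α) = -Σᵢ ẽ^α_ᵢ ∂/∂ξ₁ᵢ (where ẽ is the inverse matrix of e) satisfies J² = -id, and its Nijenhuis tensor N_J(X,Y) = [JX,JY] - [X,Y] - J[X,JY] - J[JX,Y] vanishes. -/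
open scoped BigOperators

/-- Partial derivative along `ξ₁ᵢ` on `ℝⁿ × ℝⁿ`. -/
noncomputable def pd1 {n : ℕ} (i : Fin n)
    (f : (Fin n → ℝ) × (Fin n → ℝ) → ℝ) (p : (Fin n → ℝ) × (Fin n → ℝ)) : ℝ :=
  fderiv ℝ f p (Pi.single i 1, 0)

/-- Partial derivative along `ξ₂α` on `ℝⁿ × ℝⁿ`. -/
noncomputable def pd2 {n : ℕ} (α : Fin n)
    (f : (Fin n → ℝ) × (Fin n → ℝ) → ℝ) (p : (Fin n → ℝ) × (Fin n → ℝ)) : ℝ :=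
  fderiv ℝ f p (0, Pi.single α 1)

/-- The almost complex structure determined by the invertible matrix field `e`
(with pointwise inverse `et`): `J ∂/∂ξ₁ᵢ = Σ_α eⁱ_α ∂/∂ξ₂α` and
`J ∂/∂ξ₂α = -Σᵢ ẽ^α_ᵢ ∂/∂ξ₁ᵢ`, acting on a tangent vector `v`. -/
def Jmap {n : ℕ} (e et : (Fin n → ℝ) × (Fin n → ℝ) → Matrix (Fin n) (Fin n) ℝ)
    (p v : (Fin n → ℝ) × (Fin n → ℝ)) : (Fin n → ℝ) × (Fin n → ℝ) :=
  (fun i => -∑ α, et p α i * v.2 α, fun α => ∑ i, e p i α * v.1 i)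

/-- Lie bracket of vector fields on `ℝⁿ × ℝⁿ`. -/
noncomputable def lieBr {n : ℕ}
    (X Y : (Fin n → ℝ) × (Fin n → ℝ) → (Fin n → ℝ) × (Fin n → ℝ))
    (p : (Fin n → ℝ) × (Fin n → ℝ)) : (Fin n → ℝ) × (Fin n → ℝ) :=
  fderiv ℝ Y p (X p) - fderiv ℝ X p (Y p)


namespace Stmt7Aux

variable {n : ℕ}

abbrev E (n : ℕ) := (Fin n → ℝ) × (Fin n → ℝ)

/-! ### Calculus infrastructure -/

lemma fderiv_comp1 {G : E n → E n} {p : E n} (hG : DifferentiableAt ℝ G p) (i : Fin n) (v : E n) :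
    fderiv ℝ (fun q => (G q).1 i) p v = (fderiv ℝ G p v).1 i := by
  have h := (((ContinuousLinearMap.proj (R := ℝ) (φ := fun _ : Fin n => ℝ) i).comp
    (ContinuousLinearMap.fst ℝ (Fin n → ℝ) (Fin n → ℝ))).hasFDerivAt.comp p hG.hasFDerivAt)
  have := h.fderiv
  rw [show (fun q => (G q).1 i) = (⇑((ContinuousLinearMap.proj (R := ℝ) (φ := fun _ : Fin n => ℝ) i).comp
    (ContinuousLinearMap.fst ℝ (Fin n → ℝ) (Fin n → ℝ))) ∘ G) from rfl, this]
  rfl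

lemma fderiv_comp2 {G : E n → E n} {p : E n} (hG : DifferentiableAt ℝ G p) (i : Fin n) (v : E n) :
    fderiv ℝ (fun q => (G q).2 i) p v = (fderiv ℝ G p v).2 i := by
  have h := (((ContinuousLinearMap.proj (R := ℝ) (φ := fun _ : Fin n => ℝ) i).comp
    (ContinuousLinearMap.snd ℝ (Fin n → ℝ) (Fin n → ℝ))).hasFDerivAt.comp p hG.hasFDerivAt)
  have := h.fderiv
  rw [show (fun q => (G q).2 i) = (⇑((ContinuousLinearMap.proj (R := ℝ) (φ := fun _ : Fin n => ℝ) i).comp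
    (ContinuousLinearMap.snd ℝ (Fin n → ℝ) (Fin n → ℝ))) ∘ G) from rfl, this]
  rfl

lemma pair_decomp1 (c : Fin n → ℝ) :
    ((c, 0) : E n) = ∑ j, c j • ((Pi.single j 1, 0) : E n) := by
  ext k
  · simp [Prod.fst_sum, Finset.sum_apply, Pi.single_apply, mul_ite]
  · simp [Prod.snd_sum]

lemma pair_decomp2 (c : Fin n → ℝ) :
    ((0, c) : E n) = ∑ j, c j • ((0, Pi.single j 1) : E n) := by
  ext k
  · simp [Prod.fst_sum]
  · simp [Prod.snd_sum, Finset.sum_apply, Pi.single_apply, mul_ite]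

lemma dir1 (f : E n → ℝ) (p : E n) (c : Fin n → ℝ) :
    fderiv ℝ f p (c, 0) = ∑ j, c j * pd1 j f p := by
  rw [pair_decomp1, map_sum]
  refine Finset.sum_congr rfl fun j _ => ?_
  rw [map_smul]
  simp [pd1]

lemma dir2 (f : E n → ℝ) (p : E n) (c : Fin n → ℝ) :
    fderiv ℝ f p (0, c) = ∑ j, c j * pd2 j f p := by
  rw [pair_decomp2, map_sum]
  refine Finset.sum_congr rfl fun j _ => ?_
  rw [map_smul]
  simp [pd2]

lemma fdExpand (f : E n → ℝ) (p v : E n) :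
    fderiv ℝ f p v = ∑ j, v.1 j * pd1 j f p + ∑ γ, v.2 γ * pd2 γ f p := by
  have : v = ((v.1, 0) : E n) + (0, v.2) := by norm_num
  rw [show fderiv ℝ f p v = fderiv ℝ f p ((v.1, 0) + ((0, v.2) : E n)) by rw [← this],
    map_add, dir1, dir2]

lemma fderiv_sum_mul (f g : Fin n → E n → ℝ) (p : E n)
    (hf : ∀ i, DifferentiableAt ℝ (f i) p) (hg : ∀ i, DifferentiableAt ℝ (g i) p) (v : E n) :
    fderiv ℝ (fun q => ∑ i, f i q * g i q) p v
      = ∑ i, (fderiv ℝ (f i) p v * g i p + f i p * fderiv ℝ (g i) p v) := by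
  rw [fderiv_fun_sum (A := fun i q => f i q * g i q) (fun i _ => ((hf i).mul (hg i)))]
  simp only [ContinuousLinearMap.sum_apply]
  refine Finset.sum_congr rfl fun i _ => ?_
  rw [fderiv_fun_mul (hf i) (hg i)]
  simp only [ContinuousLinearMap.add_apply, ContinuousLinearMap.smul_apply, smul_eq_mul]
  ring

/-! ### Pure multilinear algebra -/

section Alg
variable {a b : Fin n → Fin n → ℝ} {P Q P' Q' : Fin n → Fin n → Fin n → ℝ}

lemma sum4 (f : Fin n → Fin n → Fin n → Fin n → ℝ) :
    ∑ x1, ∑ x2, ∑ x3, ∑ x4, f x1 x2 x3 x4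
      = ∑ x3, ∑ x2, ∑ x4, ∑ x1, f x1 x2 x3 x4 := by
  rw [show (∑ x1, ∑ x2, ∑ x3, ∑ x4, f x1 x2 x3 x4)
      = ∑ x1, ∑ x3, ∑ x2, ∑ x4, f x1 x2 x3 x4 from
    Finset.sum_congr rfl fun x1 _ => Finset.sum_comm]
  rw [Finset.sum_comm]
  refine Finset.sum_congr rfl fun x3 _ => ?_
  rw [Finset.sum_comm]
  exact Finset.sum_congr rfl fun x2 _ => Finset.sum_comm

lemma recon (hab : ∀ i j, ∑ α, a i α * b α j = if i = j then 1 else 0)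
    (f : Fin n → ℝ) (i : Fin n) :
    f i = ∑ δ, (∑ m, f m * a m δ) * b δ i := by
  simp only [Finset.sum_mul]
  rw [Finset.sum_comm]
  have : ∀ m, ∑ δ, f m * a m δ * b δ i = f m * (if m = i then 1 else 0) := by
    intro m
    rw [← hab m i, Finset.mul_sum]
    exact Finset.sum_congr rfl fun δ _ => by ring
  rw [Finset.sum_congr rfl fun m _ => this m]
  simp

lemma contract2 (hba : ∀ α β, ∑ i, b α i * a i β = if α = β then 1 else 0)
    (g : Fin n → ℝ) (β : Fin n) :
    ∑ i, a i β * (∑ δ, b δ i * g δ) = g β := by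
  simp only [Finset.mul_sum]
  rw [Finset.sum_comm]
  have : ∀ δ, ∑ i, a i β * (b δ i * g δ) = (if δ = β then 1 else 0) * g δ := by
    intro δ
    rw [← hba δ β, Finset.sum_mul]
    exact Finset.sum_congr rfl fun i _ => by ring
  rw [Finset.sum_congr rfl fun δ _ => this δ]
  simp

lemma contract_ba (hba : ∀ α β, ∑ i, b α i * a i β = if α = β then 1 else 0)
    (t : Fin n → ℝ) (γ : Fin n) :
    ∑ m, (∑ α, b α m * t α) * a m γ = t γ := by
  simp only [Finset.sum_mul]
  rw [Finset.sum_comm]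
  have : ∀ α, ∑ m, b α m * t α * a m γ = (if α = γ then 1 else 0) * t α := by
    intro α
    rw [← hba α γ, Finset.sum_mul]
    exact Finset.sum_congr rfl fun m _ => by ring
  rw [Finset.sum_congr rfl fun α _ => this α]
  simp

/-- generic expansion: `R` is the derivative of `et`-type, `S` of `e`-type. -/
lemma coreExpand {R S : Fin n → Fin n → Fin n → ℝ}
    (hab : ∀ i j, ∑ α, a i α * b α j = if i = j then 1 else 0)
    (hRS : ∀ k α β, ∑ m, R k α m * a m β = -∑ m, b α m * S k m β)
    (c t : Fin n → ℝ) (i : Fin n) :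
    ∑ α, (∑ k, c k * R k α i) * t α
      = -∑ δ, b δ i * ∑ k, ∑ m, c k * ((∑ α, b α m * t α) * S k m δ) := by
  have h1 : ∀ k α, R k α i = ∑ δ, (-∑ m, b α m * S k m δ) * b δ i := by
    intro k α
    rw [recon hab (fun m => R k α m) i]
    exact Finset.sum_congr rfl fun δ _ => by rw [hRS]
  calc ∑ α, (∑ k, c k * R k α i) * t α
      = ∑ α, (∑ k, c k * (∑ δ, (-∑ m, b α m * S k m δ) * b δ i)) * t α := by
        refine Finset.sum_congr rfl fun α _ => ?_
        congr 1
        exact Finset.sum_congr rfl fun k _ => by rw [← h1]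
    _ = -∑ δ, b δ i * ∑ k, ∑ m, c k * ((∑ α, b α m * t α) * S k m δ) := by
        simp only [Finset.mul_sum, Finset.sum_mul, neg_mul, mul_neg,
          Finset.sum_neg_distrib, neg_inj]
        -- LHS: ∑ α ∑ k ∑ δ ∑ m ...  RHS: ∑ δ ∑ k ∑ m ∑ α ...
        rw [sum4]
        exact Finset.sum_congr rfl fun x3 _ => Finset.sum_congr rfl fun x2 _ =>
          Finset.sum_congr rfl fun x4 _ => Finset.sum_congr rfl fun x1 _ => by ring

lemma contract1 (hba : ∀ α β, ∑ i, b α i * a i β = if α = β then 1 else 0)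
    (g : Fin n → ℝ) (α : Fin n) :
    ∑ i, b α i * (∑ δ, a i δ * g δ) = g α := by
  simp only [Finset.mul_sum]
  rw [Finset.sum_comm]
  have : ∀ δ, ∑ i, b α i * (a i δ * g δ) = (if α = δ then 1 else 0) * g δ := by
    intro δ
    rw [← hba α δ, Finset.sum_mul]
    exact Finset.sum_congr rfl fun i _ => by ring
  rw [Finset.sum_congr rfl fun δ _ => this δ]
  simp

lemma S2b (hba : ∀ α β, ∑ i, b α i * a i β = if α = β then 1 else 0)
    (hQ : ∀ i j β, ∑ α, a i α * Q α j β = ∑ α, a j α * Q α i β)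
    (α γ β : Fin n) :
    ∑ m, b α m * Q γ m β = ∑ m, b γ m * Q α m β := by
  have hT1 : ∑ i, ∑ j, b α i * (b γ j * (∑ δ, a i δ * Q δ j β))
      = ∑ j, b γ j * Q α j β := by
    rw [Finset.sum_comm]
    refine Finset.sum_congr rfl fun j _ => ?_
    have : ∑ i, b α i * (b γ j * ∑ δ, a i δ * Q δ j β)
        = b γ j * ∑ i, b α i * ∑ δ, a i δ * Q δ j β := by
      rw [Finset.mul_sum]; exact Finset.sum_congr rfl fun i _ => by ring
    rw [this, contract1 hba (fun δ => Q δ j β) α]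
  have hT2 : ∑ i, ∑ j, b α i * (b γ j * (∑ δ, a i δ * Q δ j β))
      = ∑ i, b α i * Q γ i β := by
    refine Finset.sum_congr rfl fun i _ => ?_
    have : ∑ j, b α i * (b γ j * ∑ δ, a i δ * Q δ j β)
        = b α i * ∑ j, b γ j * ∑ δ, a j δ * Q δ i β := by
      rw [Finset.mul_sum]
      exact Finset.sum_congr rfl fun j _ => by rw [hQ i j β]
    rw [this, contract1 hba (fun δ => Q δ i β) γ]
  rw [← hT2, hT1]

lemma symP (hP : ∀ i j α, P i j α = P j i α) (u w : Fin n → ℝ) (α : Fin n) :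
    ∑ j, (∑ k, u k * P k j α) * w j = ∑ j, (∑ k, w k * P k j α) * u j := by
  simp only [Finset.sum_mul]
  rw [Finset.sum_comm]
  exact Finset.sum_congr rfl fun x _ => Finset.sum_congr rfl fun y _ => by
    rw [hP y x α]; ring

lemma symQ (hQ : ∀ i j β, ∑ α, a i α * Q α j β = ∑ α, a j α * Q α i β)
    (u w : Fin n → ℝ) (β : Fin n) :
    ∑ i, (∑ γ, (∑ j, a j γ * u j) * Q γ i β) * w i
      = ∑ i, (∑ γ, (∑ j, a j γ * w j) * Q γ i β) * u i := by
  have key : ∀ (u w : Fin n → ℝ),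
      ∑ i, (∑ γ, (∑ j, a j γ * u j) * Q γ i β) * w i
        = ∑ i, ∑ j, u j * w i * (∑ γ, a j γ * Q γ i β) := by
    intro u w
    refine Finset.sum_congr rfl fun i _ => ?_
    rw [Finset.sum_mul]
    rw [Finset.sum_congr rfl fun γ _ =>
      show (∑ j, a j γ * u j) * Q γ i β * w i = ∑ j, a j γ * u j * (Q γ i β * w i) from by
        simp only [Finset.sum_mul]; exact Finset.sum_congr rfl fun j _ => by ring]
    rw [Finset.sum_comm]
    refine Finset.sum_congr rfl fun j _ => ?_
    rw [Finset.mul_sum]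
    exact Finset.sum_congr rfl fun γ _ => by ring
  rw [key u w, key w u]
  rw [Finset.sum_comm]
  exact Finset.sum_congr rfl fun i _ => Finset.sum_congr rfl fun j _ => by
    rw [hQ j i β]; ring

lemma solveR {R S : Fin n → Fin n → Fin n → ℝ}
    (hR : ∀ k α β, ∑ i, (R k α i * a i β + b α i * S k i β) = 0) :
    ∀ k α β, ∑ m, R k α m * a m β = -∑ m, b α m * S k m β := by
  intro k α β
  have := hR k α β
  rw [Finset.sum_add_distrib] at this
  linarith

lemma sum3_swap13 (f : Fin n → Fin n → Fin n → ℝ) :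
    ∑ x, ∑ y, ∑ z, f x y z = ∑ z, ∑ y, ∑ x, f x y z := by
  refine (Finset.sum_comm).trans ?_
  refine (Finset.sum_congr rfl fun y _ => Finset.sum_comm).trans ?_
  exact Finset.sum_comm

lemma sum4_swap_pairs (f : Fin n → Fin n → Fin n → Fin n → ℝ) :
    ∑ x1, ∑ x2, ∑ x3, ∑ x4, f x1 x2 x3 x4
      = ∑ x3, ∑ x4, ∑ x1, ∑ x2, f x1 x2 x3 x4 := by
  refine (Finset.sum_congr rfl fun x1 _ => Finset.sum_comm).trans ?_
  refine (Finset.sum_comm).trans ?_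
  refine (Finset.sum_congr rfl fun x3 _ => (Finset.sum_congr rfl fun x1 _ => Finset.sum_comm)).trans ?_
  exact Finset.sum_congr rfl fun x3 _ => Finset.sum_comm

lemma sum3_rot (f : Fin n → Fin n → Fin n → ℝ) :
    ∑ x1, ∑ x2, ∑ x3, f x1 x2 x3 = ∑ x2, ∑ x3, ∑ x1, f x1 x2 x3 := by
  refine (Finset.sum_comm).trans ?_
  exact Finset.sum_congr rfl fun x2 _ => Finset.sum_comm

lemma sum4_rot123 (f : Fin n → Fin n → Fin n → Fin n → ℝ) :
    ∑ x1, ∑ x2, ∑ x3, ∑ x4, f x1 x2 x3 x4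
      = ∑ x2, ∑ x3, ∑ x1, ∑ x4, f x1 x2 x3 x4 := by
  refine (Finset.sum_comm).trans ?_
  exact Finset.sum_congr rfl fun x2 _ => Finset.sum_comm

lemma M1alg (hab : ∀ i j, ∑ α, a i α * b α j = if i = j then 1 else 0)
    (hba : ∀ α β, ∑ i, b α i * a i β = if α = β then 1 else 0)
    (hQ : ∀ i j β, ∑ α, a i α * Q α j β = ∑ α, a j α * Q α i β)
    (hRba2 : ∀ γ α β, ∑ i, (Q' γ α i * a i β + b α i * Q γ i β) = 0)
    (u t : Fin n → ℝ) (i : Fin n) :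
    ∑ α, (∑ γ, (∑ j, a j γ * u j) * Q' γ α i) * t α
      + ∑ α, b α i * (∑ j, (∑ γ, t γ * Q γ j α) * u j) = 0 := by
  rw [coreExpand hab (solveR hRba2) (fun γ => ∑ j, a j γ * u j) t i]
  have hmain : ∀ δ, ∑ k, ∑ m, (∑ j, a j k * u j) * ((∑ α, b α m * t α) * Q k m δ)
      = ∑ j, (∑ γ, t γ * Q γ j δ) * u j := by
    intro δ
    have stepA : ∑ k, ∑ m, (∑ j, a j k * u j) * ((∑ α, b α m * t α) * Q k m δ)
        = ∑ m, (∑ α, b α m * t α) * (∑ j, u j * (∑ k, a j k * Q k m δ)) := by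
      rw [Finset.sum_comm]
      refine Finset.sum_congr rfl fun m _ => ?_
      generalize (∑ α, b α m * t α) = W
      simp only [Finset.sum_mul, Finset.mul_sum]
      rw [Finset.sum_comm]
      exact Finset.sum_congr rfl fun _ _ => Finset.sum_congr rfl fun _ _ => by ring
    have stepB : ∑ m, (∑ α, b α m * t α) * (∑ j, u j * (∑ k, a j k * Q k m δ))
        = ∑ m, (∑ α, b α m * t α) * (∑ j, u j * (∑ k, a m k * Q k j δ)) := by
      refine Finset.sum_congr rfl fun m _ => ?_
      congr 1
      exact Finset.sum_congr rfl fun j _ => by rw [hQ j m δ]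
    have stepC' : ∀ W : Fin n → ℝ,
        ∑ m, W m * (∑ j, u j * (∑ k, a m k * Q k j δ))
        = ∑ j, u j * (∑ k, (∑ m, W m * a m k) * Q k j δ) := by
      intro W
      simp only [Finset.sum_mul, Finset.mul_sum]
      rw [sum3_rot]
      exact Finset.sum_congr rfl fun _ _ => Finset.sum_congr rfl fun _ _ =>
        Finset.sum_congr rfl fun _ _ => by ring
    have stepC := stepC' (fun m => ∑ α, b α m * t α)
    rw [stepA, stepB, stepC]
    refine Finset.sum_congr rfl fun j _ => ?_
    have hk : ∀ k : Fin n, (∑ m, (∑ α, b α m * t α) * a m k) * Q k j δ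
        = t k * Q k j δ := fun k => by rw [contract_ba hba t k]
    rw [Finset.sum_congr rfl fun k _ => hk k]
    exact mul_comm _ _
  rw [Finset.sum_congr rfl fun δ _ => congrArg (fun z => b δ i * z) (hmain δ)]
  exact neg_add_cancel _


lemma M2alg (hab : ∀ i j, ∑ α, a i α * b α j = if i = j then 1 else 0)
    (hP : ∀ i j α, P i j α = P j i α)
    (hRba1 : ∀ j α β, ∑ i, (P' j α i * a i β + b α i * P j i β) = 0)
    (s t : Fin n → ℝ) (i : Fin n) :
    ∑ α, (∑ j, (∑ γ, b γ j * s γ) * P' j α i) * t α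
      = ∑ α, (∑ j, (∑ γ, b γ j * t γ) * P' j α i) * s α := by
  rw [coreExpand hab (solveR hRba1) (fun j => ∑ γ, b γ j * s γ) t i,
      coreExpand hab (solveR hRba1) (fun j => ∑ γ, b γ j * t γ) s i, neg_inj]
  refine Finset.sum_congr rfl fun δ _ => ?_
  congr 1
  rw [Finset.sum_comm]
  exact Finset.sum_congr rfl fun m _ => Finset.sum_congr rfl fun k _ => by
    rw [hP m k δ]; ring

lemma Kcontract (hba : ∀ α β, ∑ i, b α i * a i β = if α = β then 1 else 0)
    (hRba2 : ∀ γ α β, ∑ i, (Q' γ α i * a i β + b α i * Q γ i β) = 0)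
    (hab : ∀ i j, ∑ α, a i α * b α j = if i = j then 1 else 0)
    (s t : Fin n → ℝ) (β : Fin n) :
    ∑ i, a i β * (∑ α, (∑ γ, s γ * Q' γ α i) * t α)
      = -∑ k, ∑ m, s k * ((∑ α, b α m * t α) * Q k m β) := by
  have h : ∀ i : Fin n, (∑ α, (∑ γ, s γ * Q' γ α i) * t α)
      = -∑ δ, b δ i * ∑ k, ∑ m, s k * ((∑ α, b α m * t α) * Q k m δ) :=
    fun i => coreExpand hab (solveR hRba2) s t i
  rw [Finset.sum_congr rfl fun i _ => congrArg (fun z => a i β * z) (h i)]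
  simp only [mul_neg, Finset.sum_neg_distrib, neg_inj]
  exact contract2 hba (fun δ => ∑ k, ∑ m, s k * ((∑ α, b α m * t α) * Q k m δ)) β

lemma M4alg (hab : ∀ i j, ∑ α, a i α * b α j = if i = j then 1 else 0)
    (hba : ∀ α β, ∑ i, b α i * a i β = if α = β then 1 else 0)
    (hQ : ∀ i j β, ∑ α, a i α * Q α j β = ∑ α, a j α * Q α i β)
    (hRba2 : ∀ γ α β, ∑ i, (Q' γ α i * a i β + b α i * Q γ i β) = 0)
    (s t : Fin n → ℝ) (β : Fin n) :
    ∑ i, a i β * (∑ α, (∑ γ, s γ * Q' γ α i) * t α)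
      = ∑ i, a i β * (∑ α, (∑ γ, t γ * Q' γ α i) * s α) := by
  rw [Kcontract hba hRba2 hab s t β, Kcontract hba hRba2 hab t s β, neg_inj]
  have h2 : ∀ (s t : Fin n → ℝ), ∑ k, ∑ m, s k * ((∑ α, b α m * t α) * Q k m β)
      = ∑ k, ∑ α, s k * (t α * (∑ m, b α m * Q k m β)) := by
    intro s t
    refine Finset.sum_congr rfl fun k _ => ?_
    generalize s k = c
    simp only [Finset.sum_mul, Finset.mul_sum]
    rw [Finset.sum_comm]
    exact Finset.sum_congr rfl fun _ _ => Finset.sum_congr rfl fun _ _ => by ring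
  rw [h2 s t, h2 t s]
  rw [Finset.sum_congr rfl fun k _ => Finset.sum_congr rfl fun α _ =>
    congrArg (fun z => s k * (t α * z)) (S2b hba hQ α k β)]
  rw [Finset.sum_comm]
  exact Finset.sum_congr rfl fun _ _ => Finset.sum_congr rfl fun _ _ => by ring

lemma M3alg (hab : ∀ i j, ∑ α, a i α * b α j = if i = j then 1 else 0)
    (hba : ∀ α β, ∑ i, b α i * a i β = if α = β then 1 else 0)
    (hP : ∀ i j α, P i j α = P j i α)
    (hRba1 : ∀ j α β, ∑ i, (P' j α i * a i β + b α i * P j i β) = 0)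
    (u t : Fin n → ℝ) (β : Fin n) :
    ∑ i, (∑ j, (∑ γ, b γ j * t γ) * P j i β) * u i
      + ∑ i, a i β * (∑ α, (∑ k, u k * P' k α i) * t α) = 0 := by
  rw [Kcontract (Q := P) (Q' := P') hba hRba1 hab u t β]
  rw [add_neg_eq_zero]
  simp only [Finset.sum_mul, Finset.mul_sum]
  exact Finset.sum_congr rfl fun i _ => Finset.sum_congr rfl fun j _ =>
    Finset.sum_congr rfl fun γ _ => by rw [hP j i β]; ring

lemma C1alg (hab : ∀ i j, ∑ α, a i α * b α j = if i = j then 1 else 0)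
    (hba : ∀ α β, ∑ i, b α i * a i β = if α = β then 1 else 0)
    (hP : ∀ i j α, P i j α = P j i α)
    (hQ : ∀ i j β, ∑ α, a i α * Q α j β = ∑ α, a j α * Q α i β)
    (hRba1 : ∀ j α β, ∑ i, (P' j α i * a i β + b α i * P j i β) = 0)
    (hRba2 : ∀ γ α β, ∑ i, (Q' γ α i * a i β + b α i * Q γ i β) = 0)
    (x1 x2 y1 y2 : Fin n → ℝ) (i : Fin n) :
    (-∑ α, (∑ j, (-∑ γ, b γ j * x2 γ) * P' j α i
        + ∑ γ, (∑ j, a j γ * x1 j) * Q' γ α i) * y2 α)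
    - (-∑ α, (∑ j, (-∑ γ, b γ j * y2 γ) * P' j α i
        + ∑ γ, (∑ j, a j γ * y1 j) * Q' γ α i) * x2 α)
    - (-∑ α, b α i * (∑ j, (∑ k, x1 k * P k j α + ∑ γ, x2 γ * Q γ j α) * y1 j))
    + (-∑ α, b α i * (∑ j, (∑ k, y1 k * P k j α + ∑ γ, y2 γ * Q γ j α) * x1 j)) = 0 := by
  have hM2 := M2alg hab hP hRba1 x2 y2 i
  have hM1a := M1alg hab hba hQ hRba2 x1 y2 i
  have hM1b := M1alg hab hba hQ hRba2 y1 x2 i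
  have hS1 : ∑ α, b α i * (∑ j, (∑ k, x1 k * P k j α) * y1 j)
      = ∑ α, b α i * (∑ j, (∑ k, y1 k * P k j α) * x1 j) :=
    Finset.sum_congr rfl fun α _ => congrArg (fun z => b α i * z) (symP hP x1 y1 α)
  simp only [neg_mul, add_mul, mul_add, Finset.sum_add_distrib,
    Finset.sum_neg_distrib, neg_neg, neg_add]
  linarith [hM2, hM1a, hM1b, hS1]

lemma C2alg (hab : ∀ i j, ∑ α, a i α * b α j = if i = j then 1 else 0)
    (hba : ∀ α β, ∑ i, b α i * a i β = if α = β then 1 else 0)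
    (hP : ∀ i j α, P i j α = P j i α)
    (hQ : ∀ i j β, ∑ α, a i α * Q α j β = ∑ α, a j α * Q α i β)
    (hRba1 : ∀ j α β, ∑ i, (P' j α i * a i β + b α i * P j i β) = 0)
    (hRba2 : ∀ γ α β, ∑ i, (Q' γ α i * a i β + b α i * Q γ i β) = 0)
    (x1 x2 y1 y2 : Fin n → ℝ) (β : Fin n) :
    (∑ i, (∑ j, (-∑ γ, b γ j * x2 γ) * P j i β
        + ∑ γ, (∑ j, a j γ * x1 j) * Q γ i β) * y1 i)
    - (∑ i, (∑ j, (-∑ γ, b γ j * y2 γ) * P j i β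
        + ∑ γ, (∑ j, a j γ * y1 j) * Q γ i β) * x1 i)
    - (∑ i, a i β * (-∑ α, (∑ k, x1 k * P' k α i + ∑ γ, x2 γ * Q' γ α i) * y2 α))
    + (∑ i, a i β * (-∑ α, (∑ k, y1 k * P' k α i + ∑ γ, y2 γ * Q' γ α i) * x2 α)) = 0 := by
  have hS2 := symQ hQ x1 y1 β
  have hM3a := M3alg hab hba hP hRba1 x1 y2 β
  have hM3b := M3alg hab hba hP hRba1 y1 x2 β
  have hM4 := M4alg hab hba hQ hRba2 x2 y2 β
  simp only [neg_mul, add_mul, mul_add, mul_neg, Finset.sum_add_distrib,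
    Finset.sum_neg_distrib, neg_neg, neg_add]
  linarith [hS2, hM3a, hM3b, hM4]
end Alg

/-! ### The almost complex structure -/

section ACS
variable {e et : E n → Matrix (Fin n) (Fin n) ℝ}

variable (e et) in
/-- derivative of the coefficients of `J` in direction `v`, applied to `z`. -/
noncomputable def DJ (p v z : E n) : E n :=
  (fun i => -∑ α, fderiv ℝ (fun q => et q α i) p v * z.2 α,
   fun β => ∑ i, fderiv ℝ (fun q => e q i β) p v * z.1 i)

lemma Jmap_add (p : E n) (u w : E n) :
    Jmap e et p (u + w) = Jmap e et p u + Jmap e et p w := by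
  simp only [Jmap, Prod.fst_add, Prod.snd_add, Pi.add_apply, mul_add,
    Finset.sum_add_distrib, neg_add, Prod.mk.injEq, Prod.mk_add_mk]
  constructor <;> funext i <;> simp [Finset.sum_add_distrib, mul_add]

lemma Jmap_neg (p : E n) (u : E n) : Jmap e et p (-u) = -Jmap e et p u := by
  simp only [Jmap, Prod.fst_neg, Prod.snd_neg, Pi.neg_apply, mul_neg, Finset.sum_neg_distrib,
    neg_neg, Prod.neg_mk, Prod.mk.injEq]
  constructor <;> funext i <;> simp

lemma Jmap_sub (p : E n) (u w : E n) :
    Jmap e et p (u - w) = Jmap e et p u - Jmap e et p w := by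
  rw [sub_eq_add_neg, Jmap_add, Jmap_neg, sub_eq_add_neg]

lemma JJ (hinv : ∀ p, e p * et p = 1) (hinv' : ∀ p, et p * e p = 1) (p v : E n) :
    Jmap e et p (Jmap e et p v) = -v := by
  have key : ∀ j i, ∑ α, e p j α * et p α i = if j = i then 1 else 0 := by
    intro j i
    have h2 := congrArg (fun M => M j i) (hinv p)
    simpa [Matrix.mul_apply, Matrix.one_apply] using h2
  have key' : ∀ β α, ∑ i, et p β i * e p i α = if β = α then 1 else 0 := by
    intro β α
    have h2 := congrArg (fun M => M β α) (hinv' p)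
    simpa [Matrix.mul_apply, Matrix.one_apply] using h2
  have h1 : (Jmap e et p (Jmap e et p v)).1 = (-v).1 := by
    funext i
    show -∑ α, et p α i * (∑ j, e p j α * v.1 j) = -v.1 i
    have : ∀ α, et p α i * (∑ j, e p j α * v.1 j) = ∑ j, (e p j α * et p α i) * v.1 j := by
      intro α; rw [Finset.mul_sum]; exact Finset.sum_congr rfl fun j _ => by ring
    rw [Finset.sum_congr rfl fun α _ => this α, Finset.sum_comm]
    simp only [← Finset.sum_mul, key]
    simp
  have h2 : (Jmap e et p (Jmap e et p v)).2 = (-v).2 := by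
    funext β
    show ∑ i, e p i β * (-∑ α, et p α i * v.2 α) = -v.2 β
    have : ∀ i, e p i β * (-∑ α, et p α i * v.2 α) = -∑ α, (et p α i * e p i β) * v.2 α := by
      intro i
      rw [mul_neg, Finset.mul_sum]
      congr 1
      exact Finset.sum_congr rfl fun α _ => by ring
    rw [Finset.sum_congr rfl fun i _ => this i, Finset.sum_neg_distrib, Finset.sum_comm]
    simp only [Finset.sum_neg_distrib, ← Finset.sum_mul, key']
    simp
  exact Prod.ext h1 h2

lemma contDiff_comp1 {Z : E n → E n} (hZ : ContDiff ℝ (⊤ : ℕ∞) Z) (i : Fin n) :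
    ContDiff ℝ (⊤ : ℕ∞) (fun q => (Z q).1 i) := contDiff_pi.1 hZ.fst i

lemma contDiff_comp2 {Z : E n → E n} (hZ : ContDiff ℝ (⊤ : ℕ∞) Z) (i : Fin n) :
    ContDiff ℝ (⊤ : ℕ∞) (fun q => (Z q).2 i) := contDiff_pi.1 hZ.snd i

lemma contDiff_JZ (he : ∀ i α, ContDiff ℝ (⊤ : ℕ∞) (fun p => e p i α))
    (het : ∀ α i, ContDiff ℝ (⊤ : ℕ∞) (fun p => et p α i))
    {Z : E n → E n} (hZ : ContDiff ℝ (⊤ : ℕ∞) Z) :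
    ContDiff ℝ (⊤ : ℕ∞) (fun q => Jmap e et q (Z q)) := by
  refine ContDiff.prodMk ?_ ?_
  · exact contDiff_pi.2 fun i =>
      (ContDiff.sum fun α _ => (het α i).mul (contDiff_comp2 hZ α)).neg
  · exact contDiff_pi.2 fun α =>
      ContDiff.sum fun i _ => (he i α).mul (contDiff_comp1 hZ i)

lemma fderiv_JZ (he : ∀ i α, ContDiff ℝ (⊤ : ℕ∞) (fun p => e p i α))
    (het : ∀ α i, ContDiff ℝ (⊤ : ℕ∞) (fun p => et p α i))
    {Z : E n → E n} (hZ : ContDiff ℝ (⊤ : ℕ∞) Z) (p v : E n) :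
    fderiv ℝ (fun q => Jmap e et q (Z q)) p v
      = DJ e et p v (Z p) + Jmap e et p (fderiv ℝ Z p v) := by
  have hF := contDiff_JZ he het hZ
  have hFd : DifferentiableAt ℝ (fun q => Jmap e et q (Z q)) p :=
    (hF.differentiable (by simp)).differentiableAt
  have hZd : DifferentiableAt ℝ Z p := (hZ.differentiable (by simp)).differentiableAt
  refine Prod.ext ?_ ?_
  · funext i
    rw [← fderiv_comp1 hFd i v]
    have hfun : (fun q => (Jmap e et q (Z q)).1 i)
        = fun q => -∑ α, et q α i * (Z q).2 α := rfl
    rw [hfun]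
    have h1 : ∀ α : Fin n, DifferentiableAt ℝ (fun q => et q α i) p :=
      fun α => ((het α i).differentiable (by simp)).differentiableAt
    have h2 : ∀ α : Fin n, DifferentiableAt ℝ (fun q => (Z q).2 α) p :=
      fun α => ((contDiff_comp2 hZ α).differentiable (by simp)).differentiableAt
    rw [fderiv_fun_neg, ContinuousLinearMap.neg_apply,
      fderiv_sum_mul (fun α q => et q α i) (fun α q => (Z q).2 α) p h1 h2 v]
    show -∑ α, (fderiv ℝ (fun q => et q α i) p v * (Z p).2 α
        + et p α i * fderiv ℝ (fun q => (Z q).2 α) p v)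
      = (-∑ α, fderiv ℝ (fun q => et q α i) p v * (Z p).2 α)
        + (-∑ α, et p α i * (fderiv ℝ Z p v).2 α)
    simp only [fun α => fderiv_comp2 hZd α v, Finset.sum_add_distrib, neg_add]
  · funext β
    rw [← fderiv_comp2 hFd β v]
    have hfun : (fun q => (Jmap e et q (Z q)).2 β)
        = fun q => ∑ i, e q i β * (Z q).1 i := rfl
    rw [hfun]
    have h1 : ∀ i : Fin n, DifferentiableAt ℝ (fun q => e q i β) p :=
      fun i => ((he i β).differentiable (by simp)).differentiableAt
    have h2 : ∀ i : Fin n, DifferentiableAt ℝ (fun q => (Z q).1 i) p :=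
      fun i => ((contDiff_comp1 hZ i).differentiable (by simp)).differentiableAt
    rw [fderiv_sum_mul (fun i q => e q i β) (fun i q => (Z q).1 i) p h1 h2 v]
    show ∑ i, (fderiv ℝ (fun q => e q i β) p v * (Z p).1 i
        + e p i β * fderiv ℝ (fun q => (Z q).1 i) p v)
      = (∑ i, fderiv ℝ (fun q => e q i β) p v * (Z p).1 i)
        + ∑ i, e p i β * (fderiv ℝ Z p v).1 i
    simp only [fun i => fderiv_comp1 hZd i v, Finset.sum_add_distrib]

/-! ### The core identity -/

lemma L3 (he : ∀ i α, ContDiff ℝ (⊤ : ℕ∞) (fun p => e p i α))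
    (het : ∀ α i, ContDiff ℝ (⊤ : ℕ∞) (fun p => et p α i))
    (hinv : ∀ p, e p * et p = 1) (hinv' : ∀ p, et p * e p = 1)
    (hsym1 : ∀ p i j α, pd1 i (fun q => e q j α) p = pd1 j (fun q => e q i α) p)
    (hsym2 : ∀ p i j β,
      ∑ α, e p i α * pd2 α (fun q => e q j β) p
        = ∑ α, e p j α * pd2 α (fun q => e q i β) p)
    (p x y : E n) :
    DJ e et p (Jmap e et p x) y - DJ e et p (Jmap e et p y) x
      - Jmap e et p (DJ e et p x y) + Jmap e et p (DJ e et p y x) = 0 := by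
  have hab : ∀ i j, ∑ α, e p i α * et p α j = if i = j then 1 else 0 := by
    intro i j
    have h2 := congrArg (fun M => M i j) (hinv p)
    simpa [Matrix.mul_apply, Matrix.one_apply] using h2
  have hba : ∀ α β, ∑ i, et p α i * e p i β = if α = β then 1 else 0 := by
    intro α β
    have h2 := congrArg (fun M => M α β) (hinv' p)
    simpa [Matrix.mul_apply, Matrix.one_apply] using h2
  have hde : ∀ i β, DifferentiableAt ℝ (fun q => e q i β) p :=
    fun i β => ((he i β).differentiable (by simp)).differentiableAt
  have hdet : ∀ α i, DifferentiableAt ℝ (fun q => et q α i) p :=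
    fun α i => ((het α i).differentiable (by simp)).differentiableAt
  -- the constant functions q ↦ (et q * e q) α β
  have hconst : ∀ α β (v : E n),
      fderiv ℝ (fun q => ∑ i, et q α i * e q i β) p v = 0 := by
    intro α β v
    have : (fun q : E n => ∑ i, et q α i * e q i β)
        = fun _ => if α = β then (1:ℝ) else 0 := by
      funext q
      have h2 := congrArg (fun M => M α β) (hinv' q)
      simpa [Matrix.mul_apply, Matrix.one_apply] using h2
    rw [this, fderiv_fun_const]
    rfl
  have hR : ∀ (v : E n) α β,
      ∑ i, (fderiv ℝ (fun q => et q α i) p v * e p i β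
        + et p α i * fderiv ℝ (fun q => e q i β) p v) = 0 := by
    intro v α β
    rw [← fderiv_sum_mul (fun i q => et q α i) (fun i q => e q i β) p
      (fun i => hdet α i) (fun i => hde i β) v]
    exact hconst α β v
  have hRba1 : ∀ j α β, ∑ i, (pd1 j (fun q => et q α i) p * e p i β
      + et p α i * pd1 j (fun q => e q i β) p) = 0 := by
    intro j α β
    exact hR (Pi.single j 1, 0) α β
  have hRba2 : ∀ γ α β, ∑ i, (pd2 γ (fun q => et q α i) p * e p i β
      + et p α i * pd2 γ (fun q => e q i β) p) = 0 := by
    intro γ α β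
    exact hR (0, Pi.single γ 1) α β
  have expand_e : ∀ (k β : Fin n) (v : E n), fderiv ℝ (fun q => e q k β) p v
      = ∑ j, v.1 j * pd1 j (fun q => e q k β) p
        + ∑ γ, v.2 γ * pd2 γ (fun q => e q k β) p :=
    fun k β v => fdExpand _ p v
  have expand_et : ∀ (α k : Fin n) (v : E n), fderiv ℝ (fun q => et q α k) p v
      = ∑ j, v.1 j * pd1 j (fun q => et q α k) p
        + ∑ γ, v.2 γ * pd2 γ (fun q => et q α k) p :=
    fun α k v => fdExpand _ p v
  refine Prod.ext ?_ ?_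
  · funext i
    show (DJ e et p (Jmap e et p x) y).1 i - (DJ e et p (Jmap e et p y) x).1 i
      - (Jmap e et p (DJ e et p x y)).1 i + (Jmap e et p (DJ e et p y x)).1 i
      = ((0 : E n)).1 i
    simp only [DJ, Jmap, expand_e, expand_et, Prod.fst_zero, Pi.zero_apply]
    exact C1alg (a := fun i α => e p i α) (b := fun α i => et p α i)
      (P := fun j k β => pd1 j (fun q => e q k β) p)
      (Q := fun γ k β => pd2 γ (fun q => e q k β) p)
      (P' := fun j α k => pd1 j (fun q => et q α k) p)
      (Q' := fun γ α k => pd2 γ (fun q => et q α k) p)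
      hab hba (fun i j α => hsym1 p i j α) (fun i j β => hsym2 p i j β)
      hRba1 hRba2 x.1 x.2 y.1 y.2 i
  · funext β
    show (DJ e et p (Jmap e et p x) y).2 β - (DJ e et p (Jmap e et p y) x).2 β
      - (Jmap e et p (DJ e et p x y)).2 β + (Jmap e et p (DJ e et p y x)).2 β
      = ((0 : E n)).2 β
    simp only [DJ, Jmap, expand_e, expand_et, Prod.snd_zero, Pi.zero_apply]
    exact C2alg (a := fun i α => e p i α) (b := fun α i => et p α i)
      (P := fun j k β => pd1 j (fun q => e q k β) p)
      (Q := fun γ k β => pd2 γ (fun q => e q k β) p)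
      (P' := fun j α k => pd1 j (fun q => et q α k) p)
      (Q' := fun γ α k => pd2 γ (fun q => et q α k) p)
      hab hba (fun i j α => hsym1 p i j α) (fun i j β => hsym2 p i j β)
      hRba1 hRba2 x.1 x.2 y.1 y.2 β

end ACS

end Stmt7Aux

open Stmt7Aux in
theorem stmt_7 (n : ℕ)
    (e et : (Fin n → ℝ) × (Fin n → ℝ) → Matrix (Fin n) (Fin n) ℝ)
    (he : ∀ i α, ContDiff ℝ (⊤ : ℕ∞) (fun p => e p i α))
    (het : ∀ α i, ContDiff ℝ (⊤ : ℕ∞) (fun p => et p α i))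
    (hinv : ∀ p, e p * et p = 1) (hinv' : ∀ p, et p * e p = 1)
    (hsym1 : ∀ p i j α, pd1 i (fun q => e q j α) p = pd1 j (fun q => e q i α) p)
    (hsym2 : ∀ p i j β,
      ∑ α, e p i α * pd2 α (fun q => e q j β) p
        = ∑ α, e p j α * pd2 α (fun q => e q i β) p) :
    (∀ p v, Jmap e et p (Jmap e et p v) = -v) ∧
    (∀ X Y : (Fin n → ℝ) × (Fin n → ℝ) → (Fin n → ℝ) × (Fin n → ℝ),
      ContDiff ℝ (⊤ : ℕ∞) X → ContDiff ℝ (⊤ : ℕ∞) Y → ∀ p,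
      lieBr (fun q => Jmap e et q (X q)) (fun q => Jmap e et q (Y q)) p
        - lieBr X Y p
        - Jmap e et p (lieBr X (fun q => Jmap e et q (Y q)) p)
        - Jmap e et p (lieBr (fun q => Jmap e et q (X q)) Y p) = 0) := by
  constructor
  · exact fun p v => JJ hinv hinv' p v
  · intro X Y hX hY p
    simp only [lieBr]
    simp only [fderiv_JZ he het hY p, fderiv_JZ he het hX p,
      Jmap_sub, Jmap_add, JJ hinv hinv']
    have h3 := L3 he het hinv hinv' hsym1 hsym2 p (X p) (Y p)
    rw [← h3]
    abel
end

section
/- Let ∇ be a flat torsion-free connection on a manifold L with local affine coordinates xⁱ and Christoffel symbols Γᵏᵢⱼ. On the product L × ℝ²ⁿ with fiber coordinates ξ_{ai} (a = 1,2; i = 1,…,n), define brackets by (xⁱ, ξ_{bj})ᵃ = δᵃ_b δⁱⱼ, (xⁱ, xʲ)ᵃ = 0, and (ξ_{ai}, ξ_{bj})ᶜ = δᶜ_b Σₘ Γᵐᵢⱼ ξ_{am} - δᶜ_a Σₘ Γᵐᵢⱼ ξ_{bm}, extended to smooth functions by the Leibniz rule. Then each bracket (·,·)ᵃ satisfies the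 Jacobi identity, and the pair satisfies the symmetrized Jacobi identities, given that the curvature and torsion of ∇ vanish. -/
open scoped BigOperators

/-- Partial derivative along the base coordinate `xⁱ` on `L × ℝ²ⁿ`. -/
noncomputable def pdB {n : ℕ} (i : Fin n)
    (F : (Fin n → ℝ) × (Fin 2 → Fin n → ℝ) → ℝ)
    (p : (Fin n → ℝ) × (Fin 2 → Fin n → ℝ)) : ℝ :=
  fderiv ℝ F p (Pi.single i 1, 0)

/-- Partial derivative along the fibre coordinate `ξ_{a i}`. -/
noncomputable def pdF {n : ℕ} (a : Fin 2) (i : Fin n)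
    (F : (Fin n → ℝ) × (Fin 2 → Fin n → ℝ) → ℝ)
    (p : (Fin n → ℝ) × (Fin 2 → Fin n → ℝ)) : ℝ :=
  fderiv ℝ F p (0, Pi.single a (Pi.single i 1))

/-- The covariant horizontal derivative
`∇̄ᵢ = ∂/∂xⁱ + Σ_{b,j} (Σₘ Γᵐᵢⱼ ξ_{b m}) ∂/∂ξ_{b j}`. -/
noncomputable def nablaBar {n : ℕ} (Γ : (Fin n → ℝ) → Fin n → Fin n → Fin n → ℝ)
    (i : Fin n) (F : (Fin n → ℝ) × (Fin 2 → Fin n → ℝ) → ℝ)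
    (p : (Fin n → ℝ) × (Fin 2 → Fin n → ℝ)) : ℝ :=
  pdB i F p + ∑ b, ∑ j, (∑ m, Γ p.1 i j m * p.2 b m) * pdF b j F p

/-- The pair of brackets built from the connection `Γ`:
`(F,G)ᵃ = Σᵢ (∇̄ᵢF ∂G/∂ξ_{a i} - ∂F/∂ξ_{a i} ∇̄ᵢG)`.  On coordinate functions this gives
`(xⁱ,ξ_{b j})ᵃ = δᵃ_b δⁱⱼ` and `(ξ_{a i},ξ_{b j})ᶜ = δᶜ_b Σₘ Γᵐᵢⱼ ξ_{a m} - δᶜ_a Σₘ Γᵐᵢⱼ ξ_{b m}`. -/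
noncomputable def gamBracket {n : ℕ} (Γ : (Fin n → ℝ) → Fin n → Fin n → Fin n → ℝ)
    (a : Fin 2) (F G : (Fin n → ℝ) × (Fin 2 → Fin n → ℝ) → ℝ)
    (p : (Fin n → ℝ) × (Fin 2 → Fin n → ℝ)) : ℝ :=
  ∑ i, (nablaBar Γ i F p * pdF a i G p - pdF a i F p * nablaBar Γ i G p)

open scoped BigOperators

namespace S19
variable {n : ℕ}
abbrev E (n : ℕ) := (Fin n → ℝ) × (Fin 2 → Fin n → ℝ)
abbrev Idx (n : ℕ) := Sum (Fin n) (Fin 2 × Fin n)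

def dir : Idx n → E n
  | Sum.inl i => (Pi.single i 1, 0)
  | Sum.inr q => (0, Pi.single q.1 (Pi.single q.2 1))

noncomputable def pd (s : Idx n) (F : E n → ℝ) (p : E n) : ℝ := fderiv ℝ F p (dir s)

lemma smooth_pd {F : E n → ℝ} (hF : ContDiff ℝ (⊤ : ℕ∞) F) (s : Idx n) :
    ContDiff ℝ (⊤ : ℕ∞) (pd s F) := by
  have h1 : ContDiff ℝ (⊤ : ℕ∞) (fderiv ℝ F) := hF.fderiv_right (by simp)
  exact (ContinuousLinearMap.apply ℝ ℝ (dir s)).contDiff.comp h1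

lemma pd_comm {F : E n → ℝ} (hF : ContDiff ℝ (⊤ : ℕ∞) F) (s t : Idx n) (p : E n) :
    pd s (pd t F) p = pd t (pd s F) p := by
  have hdiff : Differentiable ℝ (fderiv ℝ F) :=
    (hF.fderiv_right (m := (⊤ : ℕ∞)) (by simp)).differentiable (by simp)
  have key : ∀ u v : Idx n,
      pd u (pd v F) p = fderiv ℝ (fderiv ℝ F) p (dir u) (dir v) := by
    intro u v
    have h2 : HasFDerivAt (fun q => fderiv ℝ F q (dir v))
        ((ContinuousLinearMap.apply ℝ ℝ (dir v)).comp (fderiv ℝ (fderiv ℝ F) p)) p :=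
      (ContinuousLinearMap.apply ℝ ℝ (dir v)).hasFDerivAt.comp p (hdiff p).hasFDerivAt
    have : pd u (pd v F) p = fderiv ℝ (fun q => fderiv ℝ F q (dir v)) p (dir u) := rfl
    rw [this, h2.fderiv]
    rfl
  rw [key s t, key t s]
  exact second_derivative_symmetric (fun y => (hF.differentiable (by simp) y).hasFDerivAt)
    (hdiff p).hasFDerivAt (dir s) (dir t)

lemma pd_mul {f g : E n → ℝ} {p : E n} (hf : DifferentiableAt ℝ f p)
    (hg : DifferentiableAt ℝ g p) (s : Idx n) :
    pd s (fun q => f q * g q) p = pd s f p * g p + f p * pd s g p := by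
  simp only [pd, fderiv_fun_mul hf hg]
  simp only [ContinuousLinearMap.add_apply, ContinuousLinearMap.smul_apply, smul_eq_mul]
  ring

lemma pd_sum {ι : Type*} [Fintype ι] {f : ι → E n → ℝ} {p : E n}
    (hf : ∀ i, DifferentiableAt ℝ (f i) p) (s : Idx n) :
    pd s (fun q => ∑ i, f i q) p = ∑ i, pd s (f i) p := by
  simp only [pd, fderiv_fun_sum (fun i _ => hf i)]
  simp

lemma pd_const (s : Idx n) (c : ℝ) (p : E n) : pd s (fun _ => c) p = 0 := by
  simp [pd]

lemma pd_zero_fun (s : Idx n) (p : E n) : pd s (fun _ : E n => (0:ℝ)) p = 0 := pd_const s 0 p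

lemma pd_const_mul {f : E n → ℝ} {p : E n} (hf : DifferentiableAt ℝ f p) (c : ℝ) (s : Idx n) :
    pd s (fun q => c * f q) p = c * pd s f p := by
  simp [pd, fderiv_const_mul hf c]

lemma pd_sub {f g : E n → ℝ} {p : E n} (hf : DifferentiableAt ℝ f p)
    (hg : DifferentiableAt ℝ g p) (s : Idx n) :
    pd s (fun q => f q - g q) p = pd s f p - pd s g p := by
  simp [pd, fderiv_fun_sub hf hg]

variable {n : ℕ}

noncomputable def br (π : E n → Idx n → Idx n → ℝ) (F G : E n → ℝ) (p : E n) : ℝ :=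
  ∑ α, ∑ β, π p α β * pd α F p * pd β G p

abbrev Q (n : ℕ) := Idx n × Idx n × Idx n × Idx n

lemma sum4 (f : Idx n → Idx n → Idx n → Idx n → ℝ) :
    (∑ a, ∑ b, ∑ c, ∑ d, f a b c d) = ∑ x : Q n, f x.1 x.2.1 x.2.2.1 x.2.2.2 := by
  rw [Fintype.sum_prod_type]
  refine Finset.sum_congr rfl fun a _ => ?_
  rw [Fintype.sum_prod_type]
  refine Finset.sum_congr rfl fun b _ => ?_
  rw [Fintype.sum_prod_type]

/-- x = (γ,δ,α,β) ↦ (β,α,γ,δ) -/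
def ePerm1 : Q n ≃ Q n :=
  ⟨fun x => (x.2.2.2, x.2.2.1, x.1, x.2.1), fun y => (y.2.2.1, y.2.2.2, y.2.1, y.1),
   fun _ => rfl, fun _ => rfl⟩

/-- x ↦ (x4,x1,x2,x3) -/
def ePerm2 : Q n ≃ Q n :=
  ⟨fun x => (x.2.2.2, x.1, x.2.1, x.2.2.1), fun y => (y.2.1, y.2.2.1, y.2.2.2, y.1),
   fun _ => rfl, fun _ => rfl⟩

/-- x ↦ (x4,x2,x3,x1) -/
def ePerm3 : Q n ≃ Q n :=
  ⟨fun x => (x.2.2.2, x.2.1, x.2.2.1, x.1), fun y => (y.2.2.2, y.2.1, y.2.2.1, y.1),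
   fun _ => rfl, fun _ => rfl⟩

noncomputable def T1 (σ π : E n → Idx n → Idx n → ℝ) (F G H : E n → ℝ) (p : E n) : ℝ :=
  ∑ γ, ∑ δ, ∑ α, ∑ β, σ p γ δ * pd γ (fun q => π q α β) p * pd α F p * pd β G p * pd δ H p

noncomputable def T2 (σ π : E n → Idx n → Idx n → ℝ) (F G H : E n → ℝ) (p : E n) : ℝ :=
  ∑ γ, ∑ δ, ∑ α, ∑ β, σ p γ δ * π p α β * pd γ (pd α F) p * pd β G p * pd δ H p

noncomputable def T3 (σ π : E n → Idx n → Idx n → ℝ) (F G H : E n → ℝ) (p : E n) : ℝ :=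
  ∑ γ, ∑ δ, ∑ α, ∑ β, σ p γ δ * π p α β * pd α F p * pd γ (pd β G) p * pd δ H p

lemma pd_br {π : E n → Idx n → Idx n → ℝ} {F G : E n → ℝ} {p : E n}
    (hπ : ∀ α β, DifferentiableAt ℝ (fun q => π q α β) p)
    (hF : ContDiff ℝ (⊤ : ℕ∞) F) (hG : ContDiff ℝ (⊤ : ℕ∞) G) (γ : Idx n) :
    pd γ (br π F G) p = ∑ α, ∑ β,
      (pd γ (fun q => π q α β) p * pd α F p * pd β G p
        + π p α β * pd γ (pd α F) p * pd β G p
        + π p α β * pd α F p * pd γ (pd β G) p) := by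
  have hdF : ∀ α, DifferentiableAt ℝ (pd α F) p :=
    fun α => ((smooth_pd hF α).differentiable (by simp)) p
  have hdG : ∀ β, DifferentiableAt ℝ (pd β G) p :=
    fun β => ((smooth_pd hG β).differentiable (by simp)) p
  have hterm : ∀ α β, DifferentiableAt ℝ (fun q => π q α β * pd α F q * pd β G q) p :=
    fun α β => ((hπ α β).mul (hdF α)).mul (hdG β)
  have hbr : br π F G = fun q => ∑ α, ∑ β, π q α β * pd α F q * pd β G q := rfl
  rw [hbr, pd_sum (fun α => DifferentiableAt.fun_sum (fun β _ => hterm α β)) γ]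
  refine Finset.sum_congr rfl fun α _ => ?_
  rw [pd_sum (fun β => hterm α β) γ]
  refine Finset.sum_congr rfl fun β _ => ?_
  rw [pd_mul (f := fun q => π q α β * pd α F q) ((hπ α β).mul (hdF α)) (hdG β) γ, pd_mul (hπ α β) (hdF α) γ]
  ring

lemma br_expand {π σ : E n → Idx n → Idx n → ℝ} {F G H : E n → ℝ} {p : E n}
    (hπ : ∀ α β, DifferentiableAt ℝ (fun q => π q α β) p)
    (hF : ContDiff ℝ (⊤ : ℕ∞) F) (hG : ContDiff ℝ (⊤ : ℕ∞) G) :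
    br σ (br π F G) H p = T1 σ π F G H p + T2 σ π F G H p + T3 σ π F G H p := by
  have h0 : br σ (br π F G) H p = ∑ γ, ∑ δ, σ p γ δ * pd γ (br π F G) p * pd δ H p := rfl
  rw [h0]
  have h1 : ∀ γ : Idx n, pd γ (br π F G) p = ∑ α, ∑ β,
      (pd γ (fun q => π q α β) p * pd α F p * pd β G p
        + π p α β * pd γ (pd α F) p * pd β G p
        + π p α β * pd α F p * pd γ (pd β G) p) := fun γ => pd_br hπ hF hG γ
  simp only [h1]
  rw [T1, T2, T3]
  rw [← Finset.sum_add_distrib, ← Finset.sum_add_distrib]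
  refine Finset.sum_congr rfl fun γ _ => ?_
  rw [← Finset.sum_add_distrib, ← Finset.sum_add_distrib]
  refine Finset.sum_congr rfl fun δ _ => ?_
  rw [← Finset.sum_add_distrib, ← Finset.sum_add_distrib]
  rw [Finset.mul_sum, Finset.sum_mul]
  refine Finset.sum_congr rfl fun α _ => ?_
  rw [← Finset.sum_add_distrib, ← Finset.sum_add_distrib]
  rw [Finset.mul_sum, Finset.sum_mul]
  refine Finset.sum_congr rfl fun β _ => ?_
  ring

lemma cancelT {σ π : E n → Idx n → Idx n → ℝ} {F G H : E n → ℝ} {p : E n}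
    (hσa : ∀ α β, σ p α β = -σ p β α) (hF : ContDiff ℝ (⊤ : ℕ∞) F) :
    T2 σ π F G H p + T3 π σ H F G p = 0 := by
  have h2 : T2 σ π F G H p = ∑ x : Q n,
      σ p x.1 x.2.1 * π p x.2.2.1 x.2.2.2 * pd x.1 (pd x.2.2.1 F) p
        * pd x.2.2.2 G p * pd x.2.1 H p := by
    rw [T2, sum4]
  have h3 : T3 π σ H F G p = ∑ x : Q n,
      π p x.1 x.2.1 * σ p x.2.2.1 x.2.2.2 * pd x.2.2.1 H p
        * pd x.1 (pd x.2.2.2 F) p * pd x.2.1 G p := by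
    rw [T3, sum4]
  have key : ∀ x : Q n,
      π p x.1 x.2.1 * σ p x.2.2.1 x.2.2.2 * pd x.2.2.1 H p
        * pd x.1 (pd x.2.2.2 F) p * pd x.2.1 G p
      = -(σ p (ePerm1 x).1 (ePerm1 x).2.1 * π p (ePerm1 x).2.2.1 (ePerm1 x).2.2.2
          * pd (ePerm1 x).1 (pd (ePerm1 x).2.2.1 F) p
          * pd (ePerm1 x).2.2.2 G p * pd (ePerm1 x).2.1 H p) := by
    rintro ⟨a, b, c, d⟩
    show π p a b * σ p c d * pd c H p * pd a (pd d F) p * pd b G p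
      = -(σ p d c * π p a b * pd d (pd a F) p * pd b G p * pd c H p)
    rw [hσa c d, pd_comm hF a d p]
    ring
  rw [h2, h3]
  rw [Finset.sum_congr rfl fun x _ => key x]
  rw [Finset.sum_neg_distrib]
  rw [Equiv.sum_comp ePerm1 (fun x : Q n =>
    σ p x.1 x.2.1 * π p x.2.2.1 x.2.2.2 * pd x.1 (pd x.2.2.1 F) p
      * pd x.2.2.2 G p * pd x.2.1 H p)]
  ring

variable {n : ℕ}

lemma T1six {π σ : E n → Idx n → Idx n → ℝ} {F G H : E n → ℝ} {p : E n}
    (hK : ∀ α β γ : Idx n, (∑ s,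
      (σ p s γ * pd s (fun q => π q α β) p + σ p s α * pd s (fun q => π q β γ) p
        + σ p s β * pd s (fun q => π q γ α) p + π p s γ * pd s (fun q => σ q α β) p
        + π p s α * pd s (fun q => σ q β γ) p + π p s β * pd s (fun q => σ q γ α) p)) = 0) :
    T1 σ π F G H p + T1 π σ F G H p + T1 σ π G H F p + T1 π σ G H F p
      + T1 σ π H F G p + T1 π σ H F G p = 0 := by
  -- canonical tuple x = (α, β, γ, s)
  have conv1 : ∀ (σ' π' : E n → Idx n → Idx n → ℝ),
      T1 σ' π' F G H p = ∑ x : Q n,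
        σ' p x.2.2.2 x.2.2.1 * pd x.2.2.2 (fun q => π' q x.1 x.2.1) p
          * pd x.1 F p * pd x.2.1 G p * pd x.2.2.1 H p := by
    intro σ' π'
    rw [T1, sum4, ← Equiv.sum_comp (ePerm1 (n := n))]
    rfl
  have conv2 : ∀ (σ' π' : E n → Idx n → Idx n → ℝ),
      T1 σ' π' G H F p = ∑ x : Q n,
        σ' p x.2.2.2 x.1 * pd x.2.2.2 (fun q => π' q x.2.1 x.2.2.1) p
          * pd x.1 F p * pd x.2.1 G p * pd x.2.2.1 H p := by
    intro σ' π'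
    rw [T1, sum4, ← Equiv.sum_comp (ePerm2 (n := n))]
    refine Finset.sum_congr rfl fun x _ => ?_
    show σ' p x.2.2.2 x.1 * pd x.2.2.2 (fun q => π' q x.2.1 x.2.2.1) p
        * pd x.2.1 G p * pd x.2.2.1 H p * pd x.1 F p = _
    ring
  have conv3 : ∀ (σ' π' : E n → Idx n → Idx n → ℝ),
      T1 σ' π' H F G p = ∑ x : Q n,
        σ' p x.2.2.2 x.2.1 * pd x.2.2.2 (fun q => π' q x.2.2.1 x.1) p
          * pd x.1 F p * pd x.2.1 G p * pd x.2.2.1 H p := by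
    intro σ' π'
    rw [T1, sum4, ← Equiv.sum_comp (ePerm3 (n := n))]
    refine Finset.sum_congr rfl fun x _ => ?_
    show σ' p x.2.2.2 x.2.1 * pd x.2.2.2 (fun q => π' q x.2.2.1 x.1) p
        * pd x.2.2.1 H p * pd x.1 F p * pd x.2.1 G p = _
    ring
  have merged : T1 σ π F G H p + T1 π σ F G H p + T1 σ π G H F p + T1 π σ G H F p
      + T1 σ π H F G p + T1 π σ H F G p
      = ∑ α, ∑ β, ∑ γ, ∑ s : Idx n,
        (σ p s γ * pd s (fun q => π q α β) p + σ p s α * pd s (fun q => π q β γ) p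
          + σ p s β * pd s (fun q => π q γ α) p + π p s γ * pd s (fun q => σ q α β) p
          + π p s α * pd s (fun q => σ q β γ) p + π p s β * pd s (fun q => σ q γ α) p)
          * (pd α F p * pd β G p * pd γ H p) := by
    rw [conv1 σ π, conv1 π σ, conv2 σ π, conv2 π σ, conv3 σ π, conv3 π σ]
    rw [sum4 (fun α β γ s =>
      (σ p s γ * pd s (fun q => π q α β) p + σ p s α * pd s (fun q => π q β γ) p
        + σ p s β * pd s (fun q => π q γ α) p + π p s γ * pd s (fun q => σ q α β) p
        + π p s α * pd s (fun q => σ q β γ) p + π p s β * pd s (fun q => σ q γ α) p)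
        * (pd α F p * pd β G p * pd γ H p))]
    rw [← Finset.sum_add_distrib, ← Finset.sum_add_distrib, ← Finset.sum_add_distrib,
      ← Finset.sum_add_distrib, ← Finset.sum_add_distrib]
    refine Finset.sum_congr rfl fun x _ => ?_
    ring
  rw [merged]
  refine Finset.sum_eq_zero fun α _ => ?_
  refine Finset.sum_eq_zero fun β _ => ?_
  refine Finset.sum_eq_zero fun γ _ => ?_
  rw [← Finset.sum_mul, hK α β γ, zero_mul]

theorem sixJac {π σ : E n → Idx n → Idx n → ℝ} {F G H : E n → ℝ} {p : E n}
    (hπd : ∀ α β, DifferentiableAt ℝ (fun q => π q α β) p)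
    (hσd : ∀ α β, DifferentiableAt ℝ (fun q => σ q α β) p)
    (hπa : ∀ α β, π p α β = -π p β α)
    (hσa : ∀ α β, σ p α β = -σ p β α)
    (hK : ∀ α β γ : Idx n, (∑ s,
      (σ p s γ * pd s (fun q => π q α β) p + σ p s α * pd s (fun q => π q β γ) p
        + σ p s β * pd s (fun q => π q γ α) p + π p s γ * pd s (fun q => σ q α β) p
        + π p s α * pd s (fun q => σ q β γ) p + π p s β * pd s (fun q => σ q γ α) p)) = 0)
    (hF : ContDiff ℝ (⊤ : ℕ∞) F) (hG : ContDiff ℝ (⊤ : ℕ∞) G) (hH : ContDiff ℝ (⊤ : ℕ∞) H) :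
    br σ (br π F G) H p + br π (br σ F G) H p
      + br σ (br π G H) F p + br π (br σ G H) F p
      + br σ (br π H F) G p + br π (br σ H F) G p = 0 := by
  rw [br_expand hπd hF hG, br_expand hσd hF hG, br_expand hπd hG hH,
    br_expand hσd hG hH, br_expand hπd hH hF, br_expand hσd hH hF]
  have c1 := cancelT (σ := σ) (π := π) (F := F) (G := G) (H := H) hσa hF
  have c2 := cancelT (σ := π) (π := σ) (F := F) (G := G) (H := H) hπa hF
  have c3 := cancelT (σ := σ) (π := π) (F := G) (G := H) (H := F) hσa hG
  have c4 := cancelT (σ := π) (π := σ) (F := G) (G := H) (H := F) hπa hG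
  have c5 := cancelT (σ := σ) (π := π) (F := H) (G := F) (H := G) hσa hH
  have c6 := cancelT (σ := π) (π := σ) (F := H) (G := F) (H := G) hπa hH
  have t := T1six (π := π) (σ := σ) (F := F) (G := G) (H := H) hK
  linarith


variable {n : ℕ} (Γ : (Fin n → ℝ) → Fin n → Fin n → Fin n → ℝ)

noncomputable def Amat (p : E n) (c : Fin 2) (i j : Fin n) : ℝ :=
  ∑ m, Γ p.1 i j m * p.2 c m

noncomputable def pim (a : Fin 2) (p : E n) : Idx n → Idx n → ℝ
  | Sum.inl _, Sum.inl _ => 0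
  | Sum.inl i, Sum.inr q => (if q.1 = a then 1 else 0) * (if q.2 = i then 1 else 0)
  | Sum.inr q, Sum.inl i => -((if q.1 = a then 1 else 0) * (if q.2 = i then 1 else 0))
  | Sum.inr q, Sum.inr r => (if r.1 = a then 1 else 0) * Amat Γ p q.1 r.2 q.2
      - (if q.1 = a then 1 else 0) * Amat Γ p r.1 q.2 r.2

lemma pim_antisym (a : Fin 2) (p : E n) (α β : Idx n) :
    pim Γ a p α β = -pim Γ a p β α := by
  rcases α with i | q <;> rcases β with j | r <;> simp [pim] <;> ring

noncomputable def evalXi (c : Fin 2) (m : Fin n) : E n →L[ℝ] ℝ :=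
  (ContinuousLinearMap.proj (R := ℝ) (φ := fun _ : Fin n => ℝ) m).comp
    ((ContinuousLinearMap.proj (R := ℝ) (φ := fun _ : Fin 2 => Fin n → ℝ) c).comp
      (ContinuousLinearMap.snd ℝ (Fin n → ℝ) (Fin 2 → Fin n → ℝ)))

lemma hasFDerivAt_Amat (hΓ : ∀ i j m, ContDiff ℝ (⊤ : ℕ∞) (fun x => Γ x i j m)) (p : E n) (c : Fin 2) (i j : Fin n) :
    HasFDerivAt (fun q => Amat Γ q c i j)
      (∑ m, (Γ p.1 i j m • evalXi c m
        + p.2 c m • ((fderiv ℝ (fun x => Γ x i j m) p.1).comp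
            (ContinuousLinearMap.fst ℝ _ _)))) p := by
  apply HasFDerivAt.fun_sum
  intro m _
  have h1 : HasFDerivAt (fun q : E n => Γ q.1 i j m)
      ((fderiv ℝ (fun x => Γ x i j m) p.1).comp (ContinuousLinearMap.fst ℝ _ _)) p :=
    (((hΓ i j m).differentiable (by simp)) p.1).hasFDerivAt.comp p hasFDerivAt_fst
  have h2 : HasFDerivAt (fun q : E n => q.2 c m) (evalXi c m) p := by
    exact (evalXi (n := n) c m).hasFDerivAt (x := p)
  exact h1.mul h2

lemma diff_Amat (hΓ : ∀ i j m, ContDiff ℝ (⊤ : ℕ∞) (fun x => Γ x i j m)) (c : Fin 2) (i j : Fin n) :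
    Differentiable ℝ (fun q => Amat Γ q c i j) :=
  fun p => (hasFDerivAt_Amat Γ hΓ p c i j).differentiableAt

lemma pd_Amat_inl (hΓ : ∀ i j m, ContDiff ℝ (⊤ : ℕ∞) (fun x => Γ x i j m)) (p : E n) (c : Fin 2) (i j l : Fin n) :
    pd (Sum.inl l) (fun q => Amat Γ q c i j) p
      = ∑ m, fderiv ℝ (fun x => Γ x i j m) p.1 (Pi.single l 1) * p.2 c m := by
  have h := (hasFDerivAt_Amat Γ hΓ p c i j).fderiv
  show fderiv ℝ (fun q => Amat Γ q c i j) p (dir (Sum.inl l)) = _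
  rw [h]
  simp only [dir, ContinuousLinearMap.sum_apply, ContinuousLinearMap.add_apply,
    ContinuousLinearMap.smul_apply, ContinuousLinearMap.comp_apply,
    ContinuousLinearMap.coe_fst', ContinuousLinearMap.coe_snd',
    ContinuousLinearMap.proj_apply, evalXi, smul_eq_mul]
  simp [mul_comm]

lemma pd_Amat_inr (hΓ : ∀ i j m, ContDiff ℝ (⊤ : ℕ∞) (fun x => Γ x i j m)) (p : E n) (c : Fin 2) (i j : Fin n) (g : Fin 2) (l : Fin n) :
    pd (Sum.inr (g, l)) (fun q => Amat Γ q c i j) p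
      = (if c = g then Γ p.1 i j l else 0) := by
  have h := (hasFDerivAt_Amat Γ hΓ p c i j).fderiv
  show fderiv ℝ (fun q => Amat Γ q c i j) p (dir (Sum.inr (g, l))) = _
  rw [h]
  simp only [dir, ContinuousLinearMap.sum_apply, ContinuousLinearMap.add_apply,
    ContinuousLinearMap.smul_apply, ContinuousLinearMap.comp_apply,
    ContinuousLinearMap.coe_fst', ContinuousLinearMap.coe_snd',
    ContinuousLinearMap.proj_apply, evalXi, smul_eq_mul, map_zero, mul_zero, add_zero]
  by_cases hc : c = g
  · subst hc
    simp [Pi.single_apply]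
  · simp [Pi.single_apply, Ne.symm hc, hc]

lemma diff_pim (hΓ : ∀ i j m, ContDiff ℝ (⊤ : ℕ∞) (fun x => Γ x i j m)) (a : Fin 2) (α β : Idx n) :
    Differentiable ℝ (fun q => pim Γ a q α β) := by
  rcases α with i | q <;> rcases β with j | r
  · simp only [pim]; exact differentiable_const 0
  · simp only [pim]; exact differentiable_const _
  · simp only [pim]; exact differentiable_const _
  · simp only [pim]
    exact (((diff_Amat Γ hΓ q.1 r.2 q.2).const_mul _)).sub
      ((diff_Amat Γ hΓ r.1 q.2 r.2).const_mul _)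

lemma sumIdx (f : Idx n → ℝ) :
    (∑ s, f s) = (∑ i, f (Sum.inl i)) + ∑ c, ∑ j, f (Sum.inr (c, j)) := by
  rw [← Finset.univ_disjSum_univ, Finset.sum_disjSum, Fintype.sum_prod_type]

lemma pd_inl_eq (i : Fin n) (F : E n → ℝ) (p : E n) : pd (Sum.inl i) F p = pdB i F p := rfl

lemma pd_inr_eq (c : Fin 2) (j : Fin n) (F : E n → ℝ) (p : E n) :
    pd (Sum.inr (c, j)) F p = pdF c j F p := rfl

set_option maxHeartbeats 1000000 in
lemma gam_eq (a : Fin 2) (F G : E n → ℝ) :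
    gamBracket Γ a F G = br (pim Γ a) F G := by
  funext p
  have hRHS : br (pim Γ a) F G p
      = (∑ i, ∑ j, pim Γ a p (Sum.inl i) (Sum.inl j) * pd (Sum.inl i) F p * pd (Sum.inl j) G p)
      + (∑ i, ∑ c, ∑ j, pim Γ a p (Sum.inl i) (Sum.inr (c, j)) * pd (Sum.inl i) F p * pd (Sum.inr (c, j)) G p)
      + ((∑ c, ∑ j, ∑ i, pim Γ a p (Sum.inr (c, j)) (Sum.inl i) * pd (Sum.inr (c, j)) F p * pd (Sum.inl i) G p)
      + (∑ c, ∑ i, ∑ d, ∑ j, pim Γ a p (Sum.inr (c, i)) (Sum.inr (d, j)) * pd (Sum.inr (c, i)) F p * pd (Sum.inr (d, j)) G p)) := by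
    rw [br, sumIdx]
    congr 1
    · rw [← Finset.sum_add_distrib]
      refine Finset.sum_congr rfl fun i _ => ?_
      rw [sumIdx]
    · rw [← Finset.sum_add_distrib]
      refine Finset.sum_congr rfl fun c _ => ?_
      rw [← Finset.sum_add_distrib]
      refine Finset.sum_congr rfl fun j _ => ?_
      rw [sumIdx]
  have e11 : (∑ i, ∑ j, pim Γ a p (Sum.inl i) (Sum.inl j) * pd (Sum.inl i) F p * pd (Sum.inl j) G p) = 0 := by
    simp [pim]
  have e12 : (∑ i, ∑ c, ∑ j, pim Γ a p (Sum.inl i) (Sum.inr (c, j)) * pd (Sum.inl i) F p * pd (Sum.inr (c, j)) G p)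
      = ∑ i, pdB i F p * pdF a i G p := by
    refine Finset.sum_congr rfl fun i _ => ?_
    simp only [pim, pd_inl_eq, pd_inr_eq, ite_mul, one_mul, zero_mul]
    simp [Finset.sum_ite_irrel, Finset.sum_ite_eq, Finset.sum_ite_eq']
  have e21 : (∑ c, ∑ j, ∑ i, pim Γ a p (Sum.inr (c, j)) (Sum.inl i) * pd (Sum.inr (c, j)) F p * pd (Sum.inl i) G p)
      = -∑ j, pdF a j F p * pdB j G p := by
    simp only [pim, pd_inl_eq, pd_inr_eq, neg_mul, ite_mul, one_mul, zero_mul]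
    rw [← Finset.sum_neg_distrib]
    simp [Finset.sum_ite_irrel, Finset.sum_ite_eq, Finset.sum_ite_eq']
  have e22 : (∑ c, ∑ i, ∑ d, ∑ j, pim Γ a p (Sum.inr (c, i)) (Sum.inr (d, j)) * pd (Sum.inr (c, i)) F p * pd (Sum.inr (d, j)) G p)
      = (∑ c, ∑ i, ∑ j, Amat Γ p c j i * pdF c i F p * pdF a j G p)
        - ∑ i, ∑ d, ∑ j, Amat Γ p d i j * pdF a i F p * pdF d j G p := by
    simp only [pim, pd_inr_eq, sub_mul, ite_mul, one_mul, zero_mul, Finset.sum_sub_distrib]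
    congr 1
    · refine Finset.sum_congr rfl fun c _ => ?_
      refine Finset.sum_congr rfl fun i _ => ?_
      rw [Finset.sum_comm]
      simp [Finset.sum_ite_irrel, Finset.sum_ite_eq, Finset.sum_ite_eq']
    · simp [Finset.sum_ite_irrel, Finset.sum_ite_eq, Finset.sum_ite_eq']
  have hnb : ∀ (i : Fin n) (F' : E n → ℝ), nablaBar Γ i F' p
      = pdB i F' p + ∑ b, ∑ j, Amat Γ p b i j * pdF b j F' p := fun _ _ => rfl
  have hX : (∑ i, ∑ b, ∑ j, Amat Γ p b i j * pdF b j F p * pdF a i G p)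
      = ∑ c, ∑ i, ∑ j, Amat Γ p c j i * pdF c i F p * pdF a j G p := by
    rw [Finset.sum_comm]
    exact Finset.sum_congr rfl fun b _ => Finset.sum_comm
  have hLHS : gamBracket Γ a F G p
      = (∑ i, pdB i F p * pdF a i G p)
        + (∑ i, ∑ b, ∑ j, Amat Γ p b i j * pdF b j F p * pdF a i G p)
        - ((∑ i, pdF a i F p * pdB i G p)
        + ∑ i, ∑ b, ∑ j, Amat Γ p b i j * pdF a i F p * pdF b j G p) := by
    have hsummand : ∀ i : Fin n,
        nablaBar Γ i F p * pdF a i G p - pdF a i F p * nablaBar Γ i G p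
        = (pdB i F p * pdF a i G p + ∑ b, ∑ j, Amat Γ p b i j * pdF b j F p * pdF a i G p)
          - (pdF a i F p * pdB i G p + ∑ b, ∑ j, Amat Γ p b i j * pdF a i F p * pdF b j G p) := by
      intro i
      rw [hnb i F, hnb i G, add_mul, mul_add, Finset.sum_mul, Finset.mul_sum]
      congr 2
      · exact Finset.sum_congr rfl fun b _ => by
          rw [Finset.sum_mul]
      · exact Finset.sum_congr rfl fun b _ => by
          rw [Finset.mul_sum]
          exact Finset.sum_congr rfl fun j _ => by ring
    rw [gamBracket]
    rw [Finset.sum_congr rfl fun i _ => hsummand i]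
    rw [Finset.sum_sub_distrib, Finset.sum_add_distrib, Finset.sum_add_distrib]
  rw [hRHS, e11, e12, e21, e22, hLHS, hX]
  ring

noncomputable def Bq (Γ : (Fin n → ℝ) → Fin n → Fin n → Fin n → ℝ) (p : E n)
    (c : Fin 2) (l i j : Fin n) : ℝ :=
  ∑ m, fderiv ℝ (fun x => Γ x i j m) p.1 (Pi.single l 1) * p.2 c m

noncomputable def Cq (Γ : (Fin n → ℝ) → Fin n → Fin n → Fin n → ℝ) (p : E n)
    (c : Fin 2) (i j k : Fin n) : ℝ :=
  ∑ l, Amat Γ p c i l * Γ p.1 j k l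

noncomputable def Cl (Γ : (Fin n → ℝ) → Fin n → Fin n → Fin n → ℝ) (p : E n)
    (f : Fin 2) (k j i : Fin n) : ℝ :=
  ∑ l, Amat Γ p f l k * Γ p.1 j i l

section Kzero
variable {Γ : (Fin n → ℝ) → Fin n → Fin n → Fin n → ℝ}
variable (hΓ : ∀ i j m, ContDiff ℝ (⊤ : ℕ∞) (fun x => Γ x i j m))
variable {p : E n}
include hΓ

omit hΓ in
/-- entry functions with a base index are constant in q -/
lemma pd_pim_ll (a : Fin 2) (i j : Fin n) (s : Idx n) :
    pd s (fun q => pim Γ a q (Sum.inl i) (Sum.inl j)) p = 0 := pd_const s 0 p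

omit hΓ in
lemma pd_pim_lr (a c : Fin 2) (i j : Fin n) (s : Idx n) :
    pd s (fun q => pim Γ a q (Sum.inl i) (Sum.inr (c, j))) p = 0 := pd_const s _ p

omit hΓ in
lemma pd_pim_rl (a c : Fin 2) (i j : Fin n) (s : Idx n) :
    pd s (fun q => pim Γ a q (Sum.inr (c, j)) (Sum.inl i)) p = 0 := pd_const s _ p

lemma pd_pim_rr (a c d : Fin 2) (i j : Fin n) (s : Idx n) :
    pd s (fun q => pim Γ a q (Sum.inr (c, i)) (Sum.inr (d, j))) p
      = (if d = a then 1 else 0) * pd s (fun q => Amat Γ q c j i) p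
        - (if c = a then 1 else 0) * pd s (fun q => Amat Γ q d i j) p := by
  have h : (fun q => pim Γ a q (Sum.inr (c, i)) (Sum.inr (d, j)))
      = fun q => (if d = a then (1:ℝ) else 0) * Amat Γ q c j i
        - (if c = a then (1:ℝ) else 0) * Amat Γ q d i j := rfl
  rw [h, pd_sub (((diff_Amat Γ hΓ c j i) p).const_mul _)
    (((diff_Amat Γ hΓ d i j) p).const_mul _),
    pd_const_mul ((diff_Amat Γ hΓ c j i) p) _ s,
    pd_const_mul ((diff_Amat Γ hΓ d i j) p) _ s]

omit hΓ in
/-- SS vanishes unless both α and β are fibre indices. -/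
lemma SS_base_fst (e a : Fin 2) (γ : Idx n) (i : Fin n) (β : Idx n) :
    (∑ s, pim Γ e p s γ * pd s (fun q => pim Γ a q (Sum.inl i) β) p) = 0 := by
  rcases β with j | r
  · simp only [pd_pim_ll (Γ := Γ) (p := p), mul_zero, Finset.sum_const_zero]
  · have : ∀ s, pd s (fun q => pim Γ a q (Sum.inl i) (Sum.inr r)) p = 0 := by
      intro s
      exact pd_pim_lr a r.1 i r.2 s
    simp only [this, mul_zero, Finset.sum_const_zero]

omit hΓ in
lemma SS_base_snd (e a : Fin 2) (γ : Idx n) (i : Fin n) (α : Idx n) :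
    (∑ s, pim Γ e p s γ * pd s (fun q => pim Γ a q α (Sum.inl i)) p) = 0 := by
  rcases α with j | r
  · simp only [pd_pim_ll (Γ := Γ) (p := p), mul_zero, Finset.sum_const_zero]
  · have : ∀ s, pd s (fun q => pim Γ a q (Sum.inr r) (Sum.inl i)) p = 0 := by
      intro s
      exact pd_pim_rl a r.1 i r.2 s
    simp only [this, mul_zero, Finset.sum_const_zero]

/-- third slot base, pair fibre -/
lemma SS_L1 (e a c d : Fin 2) (i j k : Fin n) :
    (∑ s, pim Γ e p s (Sum.inl i)
      * pd s (fun q => pim Γ a q (Sum.inr (c, j)) (Sum.inr (d, k))) p)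
    = -((if d = a then 1 else 0) * (if c = e then 1 else 0) * Γ p.1 k j i)
      + (if c = a then 1 else 0) * (if d = e then 1 else 0) * Γ p.1 j k i := by
  rw [sumIdx]
  have h1 : ∀ l : Fin n, pim Γ e p (Sum.inl l) (Sum.inl i) = 0 := fun l => rfl
  simp only [h1, zero_mul, Finset.sum_const_zero, zero_add]
  have h2 : ∀ (g : Fin 2) (l : Fin n),
      pd (Sum.inr (g, l)) (fun q => pim Γ a q (Sum.inr (c, j)) (Sum.inr (d, k))) p
      = (if d = a then 1 else 0) * (if c = g then Γ p.1 k j l else 0)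
        - (if c = a then 1 else 0) * (if d = g then Γ p.1 j k l else 0) := by
    intro g l
    rw [pd_pim_rr hΓ, pd_Amat_inr Γ hΓ, pd_Amat_inr Γ hΓ]
  simp only [h2]
  have h3 : ∀ (g : Fin 2) (l : Fin n), pim Γ e p (Sum.inr (g, l)) (Sum.inl i)
      = -((if g = e then 1 else 0) * (if l = i then 1 else 0)) := fun g l => rfl
  simp only [h3]
  simp only [neg_mul, mul_sub, Finset.sum_sub_distrib, Finset.sum_neg_distrib]
  simp only [ite_mul, one_mul, zero_mul, mul_ite, mul_one, mul_zero]
  simp [Finset.sum_ite_irrel, Finset.sum_ite_eq, Finset.sum_ite_eq']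
  split_ifs <;> simp_all

end Kzero

section KzeroB
variable {Γ : (Fin n → ℝ) → Fin n → Fin n → Fin n → ℝ}
variable (hΓ : ∀ i j m, ContDiff ℝ (⊤ : ℕ∞) (fun x => Γ x i j m))
variable {p : E n}
include hΓ

set_option maxHeartbeats 1000000 in
lemma SS_L2 (e a c d f : Fin 2) (i j k : Fin n) :
    (∑ s, pim Γ e p s (Sum.inr (f, k))
      * pd s (fun q => pim Γ a q (Sum.inr (c, i)) (Sum.inr (d, j))) p)
    = (if f = e then 1 else 0) * (if d = a then 1 else 0) * Bq Γ p c k j i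
      - (if f = e then 1 else 0) * (if c = a then 1 else 0) * Bq Γ p d k i j
      + (if f = e then 1 else 0) * (if d = a then 1 else 0) * Cq Γ p c k j i
      - (if f = e then 1 else 0) * (if c = a then 1 else 0) * Cq Γ p d k i j
      - (if c = e then 1 else 0) * (if d = a then 1 else 0) * Cl Γ p f k j i
      + (if d = e then 1 else 0) * (if c = a then 1 else 0) * Cl Γ p f k i j := by
  rw [sumIdx]
  have hb : ∀ l : Fin n, pim Γ e p (Sum.inl l) (Sum.inr (f, k))
      = (if f = e then 1 else 0) * (if k = l then 1 else 0) := fun l => rfl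
  have hdl : ∀ l : Fin n,
      pd (Sum.inl l) (fun q => pim Γ a q (Sum.inr (c, i)) (Sum.inr (d, j))) p
      = (if d = a then 1 else 0) * Bq Γ p c l j i
        - (if c = a then 1 else 0) * Bq Γ p d l i j := by
    intro l
    rw [pd_pim_rr hΓ, pd_Amat_inl Γ hΓ, pd_Amat_inl Γ hΓ]
    rfl
  have hfib : ∀ (g : Fin 2) (l : Fin n),
      pd (Sum.inr (g, l)) (fun q => pim Γ a q (Sum.inr (c, i)) (Sum.inr (d, j))) p
      = (if d = a then 1 else 0) * (if c = g then Γ p.1 j i l else 0)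
        - (if c = a then 1 else 0) * (if d = g then Γ p.1 i j l else 0) := by
    intro g l
    rw [pd_pim_rr hΓ, pd_Amat_inr Γ hΓ, pd_Amat_inr Γ hΓ]
  have hgl : ∀ (g : Fin 2) (l : Fin n), pim Γ e p (Sum.inr (g, l)) (Sum.inr (f, k))
      = (if f = e then 1 else 0) * Amat Γ p g k l
        - (if g = e then 1 else 0) * Amat Γ p f l k := fun g l => rfl
  have hbase : (∑ l, pim Γ e p (Sum.inl l) (Sum.inr (f, k))
      * pd (Sum.inl l) (fun q => pim Γ a q (Sum.inr (c, i)) (Sum.inr (d, j))) p)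
      = (if f = e then 1 else 0) * (if d = a then 1 else 0) * Bq Γ p c k j i
        - (if f = e then 1 else 0) * (if c = a then 1 else 0) * Bq Γ p d k i j := by
    simp only [hb, hdl]
    simp only [ite_mul, one_mul, zero_mul, mul_ite, mul_zero, mul_sub, mul_one]
    simp [Finset.sum_ite_irrel, Finset.sum_ite_eq, Finset.sum_ite_eq',
      Finset.sum_sub_distrib]
    try split_ifs <;> simp_all
  have hfiber : (∑ g, ∑ l, pim Γ e p (Sum.inr (g, l)) (Sum.inr (f, k))
      * pd (Sum.inr (g, l)) (fun q => pim Γ a q (Sum.inr (c, i)) (Sum.inr (d, j))) p)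
      = (if f = e then 1 else 0) * (if d = a then 1 else 0) * Cq Γ p c k j i
        - (if f = e then 1 else 0) * (if c = a then 1 else 0) * Cq Γ p d k i j
        - (if c = e then 1 else 0) * (if d = a then 1 else 0) * Cl Γ p f k j i
        + (if d = e then 1 else 0) * (if c = a then 1 else 0) * Cl Γ p f k i j := by
    rw [Finset.sum_comm]
    have hg : ∀ l : Fin n, (∑ g, pim Γ e p (Sum.inr (g, l)) (Sum.inr (f, k))
        * pd (Sum.inr (g, l)) (fun q => pim Γ a q (Sum.inr (c, i)) (Sum.inr (d, j))) p)
        = (if f = e then 1 else 0) * (if d = a then 1 else 0) * (Amat Γ p c k l * Γ p.1 j i l)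
          - (if f = e then 1 else 0) * (if c = a then 1 else 0) * (Amat Γ p d k l * Γ p.1 i j l)
          - (if c = e then 1 else 0) * (if d = a then 1 else 0) * (Amat Γ p f l k * Γ p.1 j i l)
          + (if d = e then 1 else 0) * (if c = a then 1 else 0) * (Amat Γ p f l k * Γ p.1 i j l) := by
      intro l
      simp only [hgl, hfib]
      simp only [mul_sub, sub_mul, ite_mul, mul_ite, one_mul, zero_mul, mul_zero, mul_one,
        Finset.sum_sub_distrib, Finset.sum_add_distrib]
      simp [Finset.sum_ite_irrel, Finset.sum_ite_eq, Finset.sum_ite_eq']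
      split_ifs <;> simp_all <;> ring
    simp only [hg]
    simp only [Finset.sum_sub_distrib, Finset.sum_add_distrib, ← Finset.mul_sum]
    rfl
  rw [hbase, hfiber]
  ring

end KzeroB

section KzeroC
variable {Γ : (Fin n → ℝ) → Fin n → Fin n → Fin n → ℝ}
variable {L : Set (Fin n → ℝ)}
variable (hΓ : ∀ i j m, ContDiff ℝ (⊤ : ℕ∞) (fun x => Γ x i j m))
variable {p : E n}
include hΓ

set_option maxHeartbeats 2000000 in
lemma Kzero (hL : IsOpen L) (hp : p.1 ∈ L)
    (hsym : ∀ x ∈ L, ∀ i j m, Γ x i j m = Γ x j i m)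
    (hflat : ∀ x ∈ L, ∀ i j k m,
      fderiv ℝ (fun y => Γ y j k m) x (Pi.single i 1)
        - fderiv ℝ (fun y => Γ y i k m) x (Pi.single j 1)
        + ∑ l, Γ x i l m * Γ x j k l - ∑ l, Γ x j l m * Γ x i k l = 0)
    (a e : Fin 2) (α β γ : Idx n) :
    (∑ s, (pim Γ e p s γ * pd s (fun q => pim Γ a q α β) p
      + pim Γ e p s α * pd s (fun q => pim Γ a q β γ) p
      + pim Γ e p s β * pd s (fun q => pim Γ a q γ α) p
      + pim Γ a p s γ * pd s (fun q => pim Γ e q α β) p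
      + pim Γ a p s α * pd s (fun q => pim Γ e q β γ) p
      + pim Γ a p s β * pd s (fun q => pim Γ e q γ α) p)) = 0 := by
  have hGsym : ∀ i j m, Γ p.1 i j m = Γ p.1 j i m := fun i j m => hsym p.1 hp i j m
  have hDsym : ∀ (l i j m : Fin n), fderiv ℝ (fun x => Γ x i j m) p.1 (Pi.single l 1)
      = fderiv ℝ (fun x => Γ x j i m) p.1 (Pi.single l 1) := by
    intro l i j m
    have hev : (fun x => Γ x i j m) =ᶠ[nhds p.1] (fun x => Γ x j i m) :=
      Filter.eventually_of_mem (hL.mem_nhds hp) (fun x hx => hsym x hx i j m)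
    rw [hev.fderiv_eq]
  have hAm : ∀ c i j, Amat Γ p c i j = Amat Γ p c j i := by
    intro c i j; exact Finset.sum_congr rfl fun m _ => by rw [hGsym i j m]
  have hBsym : ∀ c l i j, Bq Γ p c l i j = Bq Γ p c l j i := by
    intro c l i j; exact Finset.sum_congr rfl fun m _ => by rw [hDsym l i j m]
  have hCsym : ∀ c x u v, Cq Γ p c x u v = Cq Γ p c x v u := by
    intro c x u v; exact Finset.sum_congr rfl fun l _ => by rw [hGsym u v l]
  have hClq : ∀ f x u v, Cl Γ p f x u v = Cq Γ p f x u v := by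
    intro f x u v; exact Finset.sum_congr rfl fun l _ => by rw [hAm f l x]
  have hFl : ∀ c u v w, Bq Γ p c u v w + Cq Γ p c u v w
      = Bq Γ p c v u w + Cq Γ p c v u w := by
    intro c u v w
    have hC : ∀ u v : Fin n, Cq Γ p c u v w
        = ∑ m, (∑ l, Γ p.1 u l m * Γ p.1 v w l) * p.2 c m := by
      intro u v
      rw [Cq]
      simp only [Amat, Finset.sum_mul]
      rw [Finset.sum_comm]
      exact Finset.sum_congr rfl fun m _ => Finset.sum_congr rfl fun l _ => by ring
    have step : ∀ m : Fin n,
        fderiv ℝ (fun x => Γ x v w m) p.1 (Pi.single u 1) * p.2 c m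
          + (∑ l, Γ p.1 u l m * Γ p.1 v w l) * p.2 c m
          - (fderiv ℝ (fun x => Γ x u w m) p.1 (Pi.single v 1) * p.2 c m
          + (∑ l, Γ p.1 v l m * Γ p.1 u w l) * p.2 c m) = 0 := by
      intro m
      have h0 := hflat p.1 hp u v w m
      linear_combination p.2 c m * h0
    have hz : Bq Γ p c u v w + Cq Γ p c u v w - (Bq Γ p c v u w + Cq Γ p c v u w) = 0 := by
      rw [Bq, Bq, hC u v, hC v u, ← Finset.sum_add_distrib, ← Finset.sum_add_distrib,
        ← Finset.sum_sub_distrib]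
      exact Finset.sum_eq_zero fun m _ => step m
    linarith
  rw [Finset.sum_add_distrib, Finset.sum_add_distrib, Finset.sum_add_distrib,
    Finset.sum_add_distrib, Finset.sum_add_distrib]
  rcases α with ai | ⟨ac, ai⟩ <;> rcases β with bi | ⟨bc, bi⟩ <;> rcases γ with ci | ⟨cc, ci⟩
  · rw [SS_base_fst e a _ ai _, SS_base_fst e a _ bi _, SS_base_fst e a _ ci _,
      SS_base_fst a e _ ai _, SS_base_fst a e _ bi _, SS_base_fst a e _ ci _]
    norm_num
  · rw [SS_base_fst e a _ ai _, SS_base_fst e a _ bi _, SS_base_snd e a _ ai _,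
      SS_base_fst a e _ ai _, SS_base_fst a e _ bi _, SS_base_snd a e _ ai _]
    norm_num
  · rw [SS_base_fst e a _ ai _, SS_base_snd e a _ ci _, SS_base_fst e a _ ci _,
      SS_base_fst a e _ ai _, SS_base_snd a e _ ci _, SS_base_fst a e _ ci _]
    norm_num
  · -- α base, β γ fibre
    rw [SS_base_fst e a _ ai _, SS_base_fst a e _ ai _,
      SS_base_snd e a _ ai _, SS_base_snd a e _ ai _,
      SS_L1 hΓ e a bc cc ai bi ci, SS_L1 hΓ a e bc cc ai bi ci]
    rw [hGsym ci bi ai]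
    ring
  · rw [SS_base_snd e a _ bi _, SS_base_fst e a _ bi _, SS_base_fst e a _ ci _,
      SS_base_snd a e _ bi _, SS_base_fst a e _ bi _, SS_base_fst a e _ ci _]
    norm_num
  · -- β base
    rw [SS_base_snd e a _ bi _, SS_base_snd a e _ bi _,
      SS_base_fst e a _ bi _, SS_base_fst a e _ bi _,
      SS_L1 hΓ e a cc ac bi ci ai, SS_L1 hΓ a e cc ac bi ci ai]
    rw [hGsym ai ci bi]
    ring
  · -- γ base
    rw [SS_base_snd e a _ ci _, SS_base_snd a e _ ci _,
      SS_base_fst e a _ ci _, SS_base_fst a e _ ci _,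
      SS_L1 hΓ e a ac bc ci ai bi, SS_L1 hΓ a e ac bc ci ai bi]
    rw [hGsym bi ai ci]
    ring
  · -- all fibre
    rw [SS_L2 hΓ e a ac bc cc ai bi ci, SS_L2 hΓ e a bc cc ac bi ci ai,
      SS_L2 hΓ e a cc ac bc ci ai bi, SS_L2 hΓ a e ac bc cc ai bi ci,
      SS_L2 hΓ a e bc cc ac bi ci ai, SS_L2 hΓ a e cc ac bc ci ai bi]
    simp only [hClq]
    have hCc1 : ∀ x, Cq Γ p x ci bi ai = Cq Γ p x ci ai bi := fun x => hCsym x ci bi ai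
    have hCc2 : ∀ x, Cq Γ p x ai ci bi = Cq Γ p x ai bi ci := fun x => hCsym x ai ci bi
    have hCc3 : ∀ x, Cq Γ p x bi ci ai = Cq Γ p x bi ai ci := fun x => hCsym x bi ci ai
    have hb1 : ∀ x, Bq Γ p x ci bi ai
        = Bq Γ p x ai bi ci + Cq Γ p x ai bi ci - Cq Γ p x ci ai bi := by
      intro x
      have h1 := hFl x ci ai bi
      have h2 := hBsym x ai ci bi
      have h3 := hCsym x ai ci bi
      have h4 := hBsym x ci bi ai
      linarith
    have hb2 : ∀ x, Bq Γ p x ci ai bi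
        = Bq Γ p x ai bi ci + Cq Γ p x ai bi ci - Cq Γ p x ci ai bi := by
      intro x
      have h1 := hb1 x
      have h4 := hBsym x ci bi ai
      linarith
    have hb3 : ∀ x, Bq Γ p x ai ci bi = Bq Γ p x ai bi ci := fun x => hBsym x ai ci bi
    have hb4 : ∀ x, Bq Γ p x bi ai ci
        = Bq Γ p x ai bi ci + Cq Γ p x ai bi ci - Cq Γ p x bi ai ci := by
      intro x
      have h1 := hFl x bi ai ci
      linarith
    have hb5 : ∀ x, Bq Γ p x bi ci ai
        = Bq Γ p x ai bi ci + Cq Γ p x ai bi ci - Cq Γ p x bi ai ci := by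
      intro x
      have h1 := hb4 x
      have h4 := hBsym x bi ci ai
      linarith
    simp only [hb1, hb2, hb3, hb4, hb5]
    simp only [hCc1, hCc2, hCc3]
    ring

end KzeroC
end S19

theorem stmt_19 (n : ℕ) (L : Set (Fin n → ℝ)) (hL : IsOpen L)
    (Γ : (Fin n → ℝ) → Fin n → Fin n → Fin n → ℝ)
    (hΓsmooth : ∀ i j m, ContDiff ℝ (⊤ : ℕ∞) (fun x => Γ x i j m))
    -- torsion-free
    (hsym : ∀ x ∈ L, ∀ i j m, Γ x i j m = Γ x j i m)
    -- flat
    (hflat : ∀ x ∈ L, ∀ i j k m,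
      fderiv ℝ (fun y => Γ y j k m) x (Pi.single i 1)
        - fderiv ℝ (fun y => Γ y i k m) x (Pi.single j 1)
        + ∑ l, Γ x i l m * Γ x j k l - ∑ l, Γ x j l m * Γ x i k l = 0) :
    ∀ F G H : (Fin n → ℝ) × (Fin 2 → Fin n → ℝ) → ℝ,
      ContDiff ℝ (⊤ : ℕ∞) F → ContDiff ℝ (⊤ : ℕ∞) G → ContDiff ℝ (⊤ : ℕ∞) H →
      -- each bracket satisfies the Jacobi identity
      (∀ a : Fin 2, ∀ p, p.1 ∈ L →
        gamBracket Γ a (gamBracket Γ a F G) H p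
          + gamBracket Γ a (gamBracket Γ a G H) F p
          + gamBracket Γ a (gamBracket Γ a H F) G p = 0) ∧
      -- and the pair satisfies the symmetrized Jacobi identities
      (∀ a b : Fin 2, ∀ p, p.1 ∈ L →
        (gamBracket Γ b (gamBracket Γ a F G) H p + gamBracket Γ a (gamBracket Γ b F G) H p)
          + (gamBracket Γ b (gamBracket Γ a G H) F p + gamBracket Γ a (gamBracket Γ b G H) F p)
          + (gamBracket Γ b (gamBracket Γ a H F) G p + gamBracket Γ a (gamBracket Γ b H F) G p)
          = 0) := by
  intro F G H hF hG hH
  have hπd : ∀ (a : Fin 2) (α β : S19.Idx n) (p : S19.E n),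
      DifferentiableAt ℝ (fun q => S19.pim Γ a q α β) p :=
    fun a α β p => (S19.diff_pim Γ hΓsmooth a α β) p
  constructor
  · intro a p hp
    have h := S19.sixJac (π := S19.pim Γ a) (σ := S19.pim Γ a) (p := p)
      (fun α β => hπd a α β p) (fun α β => hπd a α β p)
      (fun α β => S19.pim_antisym Γ a p α β) (fun α β => S19.pim_antisym Γ a p α β)
      (fun α β γ => S19.Kzero hΓsmooth hL hp hsym hflat a a α β γ) hF hG hH
    simp only [S19.gam_eq Γ a]
    linarith
  · intro a b p hp
    have h := S19.sixJac (π := S19.pim Γ a) (σ := S19.pim Γ b) (p := p)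
      (fun α β => hπd a α β p) (fun α β => hπd b α β p)
      (fun α β => S19.pim_antisym Γ a p α β) (fun α β => S19.pim_antisym Γ b p α β)
      (fun α β γ => S19.Kzero hΓsmooth hL hp hsym hflat a b α β γ) hF hG hH
    simp only [S19.gam_eq Γ a, S19.gam_eq Γ b]
    linarith
end
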